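/- arXiv:1904.10431 — 9 statements merged into one kernel-verified Lean document; each statement's English description precedes it below -/
import Mathlib

section
/- Let G ⊆ GL₂(Ẑ) be a closed subgroup, let ℓ be a prime number, and let β ≥ 0 be an integer. Identify GL₂(Ẑ) ≅ GL₂(ℤ_ℓ) × GL₂(ℤ_(ℓ)), where ℤ_(ℓ) = ∏_{p ≠ ℓ} ℤ_p. Assume that for every integer γ with β ≤ γ ≤ max{β, α_ℓ}, one has ker(GL₂(ℤ/ℓ^{γ+1}ℤ) → GL₂(ℤ/ℓ^γℤ)) × {1} ⊆ (π_{ℓ^∞,ℓ^{γ+1}} × id)(G), where π_{ℓ^∞,ℓ^{γ+1}} : GL₂(ℤ_ℓ) → GL₂(ℤ/ℓ^{γ+1}ℤ) is the reduction map and id is the identity on GL₂(ℤ_(ℓ)). Then ker(GL₂(ℤ_ℓ) → GL₂(ℤ/ℓ^βℤ)) × {1} ⊆ G. -/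
open scoped MatrixGroups

/-- `α_ℓ`: 2 if ℓ = 2, else 1. -/
def alphaExp (ℓ : ℕ) : ℕ := if ℓ = 2 then 2 else 1

/-- The map `GL₂(R) → GL₂(S)` induced by a ring hom `R →+* S`. -/
abbrev glMap {R S : Type*} [CommRing R] [CommRing S] (f : R →+* S) :
    GL (Fin 2) R →* GL (Fin 2) S := Matrix.GeneralLinearGroup.map f

/-- `SL₂(R)` viewed as a subgroup of `GL₂(R)`. -/
def SL2subgroup (R : Type*) [CommRing R] : Subgroup (GL (Fin 2) R) :=
  (Matrix.SpecialLinearGroup.toGL (n := Fin 2) (R := R)).range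

/-- `Ẑ`, the profinite completion of `ℤ`, realized as the inverse limit of `ℤ/nℤ`. -/
def ZHat : Subring (∀ n : ℕ+, ZMod n) where
  carrier := {x | ∀ (d n : ℕ+) (h : (d : ℕ) ∣ (n : ℕ)),
    ZMod.castHom h (ZMod (d : ℕ)) (x n) = x d}
  mul_mem' {x y} hx hy := fun d n h => by
    simp only [Pi.mul_apply, map_mul, hx d n h, hy d n h]
  one_mem' := fun d n h => map_one (ZMod.castHom h (ZMod (d : ℕ)))
  add_mem' {x y} hx hy := fun d n h => by
    simp only [Pi.add_apply, map_add, hx d n h, hy d n h]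
  zero_mem' := fun d n h => map_zero (ZMod.castHom h (ZMod (d : ℕ)))
  neg_mem' {x} hx := fun d n h => by
    simp only [Pi.neg_apply, map_neg, hx d n h]

/-- Reduction `Ẑ → ℤ/mℤ`. -/
def ZHat.proj (m : ℕ+) : ZHat →+* ZMod (m : ℕ) :=
  (Pi.evalRingHom (fun n : ℕ+ => ZMod (n : ℕ)) m).comp (Subring.subtype ZHat)

/-- Reduction `GL₂(Ẑ) → GL₂(ℤ/mℤ)`. -/
abbrev GLred (m : ℕ+) : GL (Fin 2) ZHat →* GL (Fin 2) (ZMod (m : ℕ)) :=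
  glMap (ZHat.proj m)

/-- The canonical projection `Ẑ → ℤ_ℓ`. -/
def ZHat.toPadicInt (ℓ : ℕ) [Fact ℓ.Prime] : ZHat →+* ℤ_[ℓ] :=
  PadicInt.lift (f := fun n => ZHat.proj ⟨ℓ ^ n, pow_pos (Nat.Prime.pos Fact.out) n⟩)
    (fun k1 k2 hk => RingHom.ext fun x =>
      x.2 ⟨ℓ ^ k1, pow_pos (Nat.Prime.pos Fact.out) k1⟩
        ⟨ℓ ^ k2, pow_pos (Nat.Prime.pos Fact.out) k2⟩ (pow_dvd_pow ℓ hk))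

/-- `ℤ_(ℓ) = ∏_{p ≠ ℓ} ℤ_p`, realized as the inverse limit of `ℤ/nℤ` over `n` coprime to `ℓ`. -/
def ZHatAway (ℓ : ℕ) : Subring (∀ n : {n : ℕ+ // ¬ (ℓ ∣ (n : ℕ))}, ZMod ((n : ℕ+) : ℕ)) where
  carrier := {x | ∀ (d n : {n : ℕ+ // ¬ (ℓ ∣ (n : ℕ))}) (h : ((d : ℕ+) : ℕ) ∣ ((n : ℕ+) : ℕ)),
    ZMod.castHom h (ZMod ((d : ℕ+) : ℕ)) (x n) = x d}
  mul_mem' {x y} hx hy := fun d n h => by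
    simp only [Pi.mul_apply, map_mul, hx d n h, hy d n h]
  one_mem' := fun d n h => map_one (ZMod.castHom h (ZMod ((d : ℕ+) : ℕ)))
  add_mem' {x y} hx hy := fun d n h => by
    simp only [Pi.add_apply, map_add, hx d n h, hy d n h]
  zero_mem' := fun d n h => map_zero (ZMod.castHom h (ZMod ((d : ℕ+) : ℕ)))
  neg_mem' {x} hx := fun d n h => by
    simp only [Pi.neg_apply, map_neg, hx d n h]

/-- The canonical projection `Ẑ → ℤ_(ℓ)`. -/
def ZHat.away (ℓ : ℕ) : ZHat →+* ZHatAway ℓ where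
  toFun x := ⟨fun n => x.1 n.1, fun d n h => x.2 d.1 n.1 h⟩
  map_one' := rfl
  map_mul' _ _ := rfl
  map_zero' := rfl
  map_add' _ _ := rfl

/-- The radical of a natural number. -/
def radical (n : ℕ) : ℕ := ∏ p ∈ n.primeFactors, p

/-- The modified radical `rad'`. -/
def radical' (n : ℕ) : ℕ := if 4 ∣ n then 2 * radical n else radical n

lemma radical_pos (n : ℕ) : 0 < radical n :=
  Finset.prod_pos fun p hp => (Nat.prime_of_mem_primeFactors hp).pos

lemma radical'_pos (n : ℕ) : 0 < radical' n := by
  unfold radical'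
  split
  · exact Nat.mul_pos two_pos (radical_pos n)
  · exact radical_pos n

lemma radical_dvd (n : ℕ) : radical n ∣ n := Nat.prod_primeFactors_dvd n

lemma radical'_dvd (n : ℕ) : radical' n ∣ n := by
  unfold radical'
  split
  case isTrue h4 =>
    rcases Nat.eq_zero_or_pos n with rfl | hn
    · exact Dvd.intro 0 rfl
    · have h2 : 2 ∈ n.primeFactors :=
        Nat.mem_primeFactors.mpr ⟨Nat.prime_two, dvd_trans ⟨2, rfl⟩ h4, hn.ne'⟩
      set P : ℕ := ∏ p ∈ n.primeFactors.erase 2, p with hP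
      have hrad : radical n = 2 * P := by
        rw [radical, ← Finset.mul_prod_erase _ _ h2]
      have hPdvd : P ∣ n := by
        refine dvd_trans ?_ (radical_dvd n)
        exact Finset.prod_dvd_prod_of_subset _ _ _ (Finset.erase_subset _ _)
      have hPodd : ¬ (2 ∣ P) := by
        intro hdvd
        obtain ⟨p, hp, hpdvd⟩ :=
          (Nat.Prime.prime Nat.prime_two).exists_mem_finset_dvd hdvd
        have hpp := Nat.prime_of_mem_primeFactors (Finset.mem_of_mem_erase hp)
        have : p = 2 := ((Nat.prime_dvd_prime_iff_eq Nat.prime_two hpp).mp hpdvd).symm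
        exact (Finset.ne_of_mem_erase hp) this
      have hcop : Nat.Coprime 4 P := by
        have : Nat.Coprime 2 P := (Nat.Prime.coprime_iff_not_dvd Nat.prime_two).mpr hPodd
        have h4eq : (4 : ℕ) = 2 ^ 2 := by norm_num
        rw [h4eq]
        exact Nat.Coprime.pow_left 2 this
      have : 4 * P ∣ n := hcop.mul_dvd_of_dvd_of_dvd h4 hPdvd
      calc 2 * radical n = 4 * P := by rw [hrad]; ring
        _ ∣ n := this
  case isFalse => exact radical_dvd n


/-!
For `f ≥ α_ℓ` the binomial theorem gives `(1 + ℓ^f A)^ℓ ≡ 1 + ℓ^(f+1) A (mod ℓ^(f+2))`, so the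
`ℓ`-th power map carries the layer `ker(GL₂(ℤ/ℓ^(f+1)) → GL₂(ℤ/ℓ^f))` onto the next one. Hence
once the image of `G ∩ (GL₂(ℤ_ℓ) × {1})` contains the layers from `β` up to `max β α_ℓ`, it
contains every higher layer, and therefore the whole kernel of reduction to `ℤ/ℓ^β` at every
finite level `ℓ^e`. By the Chinese remainder theorem an element of `GL₂(ℤ_ℓ) × {1}` is determined
modulo `N` by its reduction modulo a large enough `ℓ^e`, so `g` is a limit of elements of `G`.
-/

lemma glMap_comp_apply {R S T : Type*} [CommRing R] [CommRing S] [CommRing T] (f : R →+* S)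
    (g : S →+* T) (x : GL (Fin 2) R) : glMap (g.comp f) x = glMap g (glMap f x) :=
  rfl

lemma one_le_alphaExp (ℓ : ℕ) : 1 ≤ alphaExp ℓ := by
  unfold alphaExp; split <;> omega

lemma pow_add_two_dvd_pow_mul_choose {ℓ f m : ℕ} (hℓ : ℓ.Prime) (hf : alphaExp ℓ ≤ f)
    (hm : 2 ≤ m) (hmℓ : m ≤ ℓ) : ℓ ^ (f + 2) ∣ ℓ ^ (f * m) * ℓ.choose m := by
  have hf1 := (one_le_alphaExp ℓ).trans hf
  rcases hmℓ.lt_or_eq with hmℓ | rfl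
  · rw [pow_succ]
    exact mul_dvd_mul (pow_dvd_pow _ (by nlinarith)) (hℓ.dvd_choose_self (by omega) hmℓ)
  · rw [Nat.choose_self, mul_one]
    refine pow_dvd_pow _ ?_
    rcases eq_or_ne m 2 with rfl | h2
    · have : alphaExp 2 = 2 := rfl
      omega
    · have : 3 ≤ m := by omega
      nlinarith

theorem one_add_natCast_pow_mul_pow_eq {R : Type*} [Ring R] {ℓ f : ℕ} (hℓ : ℓ.Prime)
    (hf : alphaExp ℓ ≤ f) (hR : (ℓ : R) ^ (f + 2) = 0) (d : R) :
    (1 + (ℓ : R) ^ f * d) ^ ℓ = 1 + (ℓ : R) ^ (f + 1) * d := by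
  have hℓd : Commute ((ℓ : R) ^ f) d := (Nat.cast_commute ℓ d).pow_left f
  rw [add_comm, (Commute.one_right _).add_pow,
    Finset.sum_eq_add_of_mem 0 1 (by simp) (by simp [hℓ.pos]) zero_ne_one]
  · simp only [pow_zero, one_pow, Nat.choose_zero_right, Nat.cast_one, mul_one, pow_one,
      Nat.choose_one_right, add_comm (1 : R), mul_assoc, pow_succ, ← Nat.cast_comm ℓ d]
  · intro m hm hm01
    obtain ⟨q, hq⟩ := pow_add_two_dvd_pow_mul_choose hℓ hf (by omega)
      (Nat.lt_succ_iff.mp (Finset.mem_range.mp hm))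
    calc ((ℓ : R) ^ f * d) ^ m * 1 ^ (ℓ - m) * (ℓ.choose m : R)
        = ((ℓ ^ (f * m) * ℓ.choose m : ℕ) : R) * d ^ m := by
          rw [hℓd.mul_pow, one_pow, mul_one, ← pow_mul, mul_assoc,
            ← (Nat.cast_commute _ _).eq]
          push_cast; rw [mul_assoc]
      _ = 0 := by rw [hq]; push_cast; rw [hR, zero_mul, zero_mul]

lemma ZMod.exists_eq_add_mul_of_castHom_eq {n d : ℕ} [NeZero n] (hd : d ∣ n) {x y : ZMod n}
    (h : ZMod.castHom hd (ZMod d) x = ZMod.castHom hd (ZMod d) y) : ∃ c, x = y + d * c := by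
  have hxy : ZMod.castHom hd (ZMod d) ((x - y).val : ZMod n) = 0 := by
    rw [ZMod.natCast_zmod_val, map_sub, h, sub_self]
  rw [map_natCast, ZMod.natCast_eq_zero_iff] at hxy
  obtain ⟨c, hc⟩ := hxy
  exact ⟨c, by rw [← Nat.cast_mul, ← hc, ZMod.natCast_zmod_val, add_sub_cancel]⟩

lemma Matrix.exists_eq_add_natCast_mul_of_map_castHom_eq {ι : Type*} [Fintype ι] [DecidableEq ι]
    {n d : ℕ} [NeZero n] (hd : d ∣ n) {M N : Matrix ι ι (ZMod n)}
    (h : (ZMod.castHom hd (ZMod d)).mapMatrix M = (ZMod.castHom hd (ZMod d)).mapMatrix N) :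
    ∃ C, M = N + (d : Matrix ι ι (ZMod n)) * C := by
  choose C hC using fun i j =>
    ZMod.exists_eq_add_mul_of_castHom_eq hd (congrFun (congrFun h i) j)
  exact ⟨Matrix.of C, by ext i j; simp [hC i j, ← nsmul_eq_mul]⟩

section Layers

variable {ℓ : ℕ}

abbrev glReduce (ℓ : ℕ) {d e : ℕ} (h : d ≤ e) :
    GL (Fin 2) (ZMod (ℓ ^ e)) →* GL (Fin 2) (ZMod (ℓ ^ d)) :=
  glMap (ZMod.castHom (pow_dvd_pow ℓ h) (ZMod (ℓ ^ d)))

lemma Matrix.natCast_pow_eq_zero {ι : Type*} [Fintype ι] [DecidableEq ι] [Nonempty ι] (e : ℕ) :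
    (ℓ : Matrix ι ι (ZMod (ℓ ^ e))) ^ e = 0 := by
  rw [← Nat.cast_pow]
  exact CharP.cast_eq_zero _ _

lemma glReduce_glReduce {c d e : ℕ} (hcd : c ≤ d) (hde : d ≤ e) (k : GL (Fin 2) (ZMod (ℓ ^ e))) :
    glReduce ℓ hcd (glReduce ℓ hde k) = glReduce ℓ (hcd.trans hde) k := by
  rw [← glMap_comp_apply, ZMod.castHom_comp]

variable [Fact ℓ.Prime]

lemma glReduce_toZModPow {d e : ℕ} (h : d ≤ e) (s : GL (Fin 2) ℤ_[ℓ]) :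
    glReduce ℓ h (glMap (PadicInt.toZModPow e) s) = glMap (PadicInt.toZModPow d) s := by
  rw [← glMap_comp_apply, PadicInt.zmod_cast_comp_toZModPow d e h]

theorem ker_glReduce_succ_le_map_succ {S : Subgroup (GL (Fin 2) ℤ_[ℓ])} {f : ℕ}
    (hf : alphaExp ℓ ≤ f)
    (hS : (glReduce ℓ f.le_succ).ker ≤ S.map (glMap (PadicInt.toZModPow (f + 1)))) :
    (glReduce ℓ (f + 1).le_succ).ker ≤ S.map (glMap (PadicInt.toZModPow (f + 2))) := by
  have hℓ : ℓ.Prime := Fact.out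
  have hf1 : 1 ≤ f := (one_le_alphaExp ℓ).trans hf
  intro k hk
  -- Write `k = 1 + ℓ^(f+1) A`; a preimage in `S` of `1 + ℓ^f A` at level `f + 1` has `ℓ`-th power
  -- mapping to `k` at level `f + 2`.
  obtain ⟨A, hA⟩ := Matrix.exists_eq_add_natCast_mul_of_map_castHom_eq (M := k.val) (N := 1)
    (pow_dvd_pow ℓ (f + 1).le_succ) (by rw [map_one]; exact congrArg Units.val hk)
  rw [Nat.cast_pow] at hA
  let π := ZMod.castHom (pow_dvd_pow ℓ (f + 1).le_succ) (ZMod (ℓ ^ (f + 1)))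
  have hnil : IsNilpotent
      ((ℓ : Matrix (Fin 2) (Fin 2) (ZMod (ℓ ^ (f + 1)))) ^ f * π.mapMatrix A) := by
    refine Commute.isNilpotent_mul_right ((Nat.cast_commute _ _).pow_left f) ⟨f + 1, ?_⟩
    rw [← pow_mul, mul_comm, pow_mul, Matrix.natCast_pow_eq_zero, zero_pow (by omega)]
  obtain ⟨s, hs, hsy⟩ := hS (x := hnil.isUnit_one_add.unit) (by
    rw [MonoidHom.mem_ker]
    ext : 1
    change (ZMod.castHom _ (ZMod (ℓ ^ f))).mapMatrix (1 + _) = 1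
    rw [map_add, map_one, map_mul, map_pow, map_natCast, Matrix.natCast_pow_eq_zero, zero_mul,
      add_zero])
  obtain ⟨C, hC⟩ := Matrix.exists_eq_add_natCast_mul_of_map_castHom_eq
    (M := (glMap (PadicInt.toZModPow (f + 2)) s).val) (N := 1 + (ℓ : Matrix _ _ _) ^ f * A)
    (pow_dvd_pow ℓ (f + 1).le_succ) (by
      have := congrArg Units.val ((glReduce_toZModPow (f + 1).le_succ s).trans hsy)
      rw [map_add, map_one, map_mul, map_pow, map_natCast]
      exact this)
  rw [Nat.cast_pow] at hC
  have hℓ0 := Matrix.natCast_pow_eq_zero (ℓ := ℓ) (ι := Fin 2) (f + 2)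
  refine ⟨s ^ ℓ, pow_mem hs ℓ, Units.ext ?_⟩
  calc (glMap (PadicInt.toZModPow (f + 2)) (s ^ ℓ)).val
      = (1 + (ℓ : Matrix _ _ _) ^ f * (A + (ℓ : Matrix _ _ _) * C)) ^ ℓ := by
        rw [map_pow, Units.val_pow_eq_pow_val, hC, mul_add, ← mul_assoc, ← pow_succ, add_assoc]
    _ = 1 + (ℓ : Matrix _ _ _) ^ (f + 1) * (A + (ℓ : Matrix _ _ _) * C) :=
        one_add_natCast_pow_mul_pow_eq hℓ hf hℓ0 _
    _ = k.val := by rw [hA, mul_add, ← mul_assoc, ← pow_succ, hℓ0, zero_mul, add_zero]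

theorem ker_glReduce_succ_le_map {S : Subgroup (GL (Fin 2) ℤ_[ℓ])} {β : ℕ}
    (hS : ∀ γ, β ≤ γ → γ ≤ max β (alphaExp ℓ) →
      (glReduce ℓ γ.le_succ).ker ≤ S.map (glMap (PadicInt.toZModPow (γ + 1))))
    {γ : ℕ} (hγ : β ≤ γ) :
    (glReduce ℓ γ.le_succ).ker ≤ S.map (glMap (PadicInt.toZModPow (γ + 1))) := by
  induction γ, hγ using Nat.le_induction with
  | base => exact hS β le_rfl (le_max_left _ _)
  | succ γ hβγ ih =>
    by_cases hγ : γ + 1 ≤ max β (alphaExp ℓ)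
    · exact hS (γ + 1) (hβγ.trans γ.le_succ) hγ
    · exact ker_glReduce_succ_le_map_succ (by omega) ih

theorem ker_glReduce_le_map {S : Subgroup (GL (Fin 2) ℤ_[ℓ])} {β : ℕ}
    (hS : ∀ γ, β ≤ γ → γ ≤ max β (alphaExp ℓ) →
      (glReduce ℓ γ.le_succ).ker ≤ S.map (glMap (PadicInt.toZModPow (γ + 1))))
    {e : ℕ} (he : β ≤ e) :
    (glReduce ℓ he).ker ≤ S.map (glMap (PadicInt.toZModPow e)) := by
  induction e, he using Nat.le_induction with
  | base =>
    intro k hk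
    have hid : glReduce ℓ (le_refl β) = MonoidHom.id _ := by
      rw [glReduce, glMap, ZMod.castHom_self, Matrix.GeneralLinearGroup.map_id]
    rw [MonoidHom.mem_ker, hid, MonoidHom.id_apply] at hk
    exact hk ▸ one_mem _
  | succ e hβe ih =>
    intro k hk
    obtain ⟨s, hs, hsk⟩ := ih (x := glReduce ℓ e.le_succ k) (by
      rw [MonoidHom.mem_ker, glReduce_glReduce]; exact hk)
    have hlayer : k * (glMap (PadicInt.toZModPow (e + 1)) s)⁻¹ ∈ (glReduce ℓ e.le_succ).ker := by
      rw [MonoidHom.mem_ker, map_mul, map_inv, glReduce_toZModPow, hsk, mul_inv_cancel]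
    simpa using mul_mem (ker_glReduce_succ_le_map hS hβe hlayer) (Subgroup.mem_map_of_mem _ hs)

end Layers

open Filter Topology

lemma ZMod.castHom_prod_castHom_injective {a b : ℕ} (hab : Nat.Coprime a b) :
    Function.Injective ((ZMod.castHom (dvd_mul_right a b) (ZMod a)).prod
      (ZMod.castHom (dvd_mul_left b a) (ZMod b))) := by
  have h : (ZMod.castHom (dvd_mul_right a b) (ZMod a)).prod
      (ZMod.castHom (dvd_mul_left b a) (ZMod b)) = (ZMod.chineseRemainder hab : _ →+* _) :=
    RingHom.ext_zmod _ _
  rw [h]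
  exact (ZMod.chineseRemainder hab).injective

namespace ZHat

lemma castHom_proj {d n : ℕ+} (h : (d : ℕ) ∣ n) (x : ZHat) :
    ZMod.castHom h (ZMod d) (proj n x) = proj d x :=
  x.2 d n h

lemma tendsto_nhds {ι : Type*} {l : Filter ι} {x : ι → ZHat} {z : ZHat}
    (h : ∀ N, ∀ᶠ i in l, proj N (x i) = proj N z) : Tendsto x l (𝓝 z) := by
  rw [tendsto_subtype_rng, tendsto_pi_nhds]
  intro N
  rw [nhds_discrete, tendsto_pure]
  exact h N

lemma proj_mul_eq_of_coprime {a b : ℕ+} (hab : Nat.Coprime a b) {x y : ZHat}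
    (ha : proj a x = proj a y) (hb : proj b x = proj b y) :
    proj (a * b) x = proj (a * b) y := by
  refine ZMod.castHom_prod_castHom_injective hab (Prod.ext ?_ ?_)
  · exact (castHom_proj (n := a * b) (dvd_mul_right _ _) x).trans
      (ha.trans (castHom_proj _ y).symm)
  · exact (castHom_proj (n := a * b) (dvd_mul_left _ _) x).trans
      (hb.trans (castHom_proj _ y).symm)

lemma toZModPow_comp_toPadicInt (ℓ : ℕ) [Fact ℓ.Prime] (e : ℕ) :
    (PadicInt.toZModPow e).comp (toPadicInt ℓ) = proj ⟨ℓ ^ e, pow_pos (Nat.Prime.pos Fact.out) e⟩ :=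
  PadicInt.lift_spec _ e

end ZHat

lemma GLred_eq_iff {N : ℕ+} {x y : GL (Fin 2) ZHat} :
    GLred N x = GLred N y ↔ ∀ i j, ZHat.proj N (x i j) = ZHat.proj N (y i j) := by
  rw [Units.ext_iff, ← Matrix.ext_iff]
  rfl

lemma GLred_eq_of_dvd {d n : ℕ+} (h : (d : ℕ) ∣ n) {x y : GL (Fin 2) ZHat}
    (hxy : GLred n x = GLred n y) : GLred d x = GLred d y := by
  rw [GLred_eq_iff] at hxy ⊢
  intro i j
  rw [← ZHat.castHom_proj h, hxy, ZHat.castHom_proj]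

lemma tendsto_nhds_of_eventually_GLred_eq {ι : Type*} {l : Filter ι} {x : ι → GL (Fin 2) ZHat}
    {g : GL (Fin 2) ZHat} (h : ∀ N, ∀ᶠ i in l, GLred N (x i) = GLred N g) :
    Tendsto x l (𝓝 g) := by
  have tendsto_val : ∀ {y : ι → GL (Fin 2) ZHat} {g' : GL (Fin 2) ZHat},
      (∀ N, ∀ᶠ i in l, GLred N (y i) = GLred N g') → Tendsto (fun i => (y i).val) l (𝓝 g'.val) :=
    fun h => tendsto_pi_nhds.2 fun a => tendsto_pi_nhds.2 fun b =>
      ZHat.tendsto_nhds fun N => (h N).mono fun i hi => GLred_eq_iff.1 hi a b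
  rw [Units.isInducing_embedProduct.tendsto_nhds_iff]
  exact (tendsto_val h).prodMk_nhds (MulOpposite.continuous_op.tendsto _ |>.comp
    (tendsto_val fun N => (h N).mono fun i hi => by rw [map_inv, map_inv, hi]))

lemma mem_of_forall_exists_GLred_eq {s : Set (GL (Fin 2) ZHat)} (hs : IsClosed s)
    {g : GL (Fin 2) ZHat} (h : ∀ N : ℕ+, ∃ x ∈ s, GLred N x = GLred N g) : g ∈ s := by
  choose x hxs hx using h
  refine hs.mem_of_tendsto (b := atTop) (f := fun n : ℕ => x ⟨n.factorial, n.factorial_pos⟩)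
    (tendsto_nhds_of_eventually_GLred_eq fun N => ?_) (Eventually.of_forall fun n => hxs _)
  filter_upwards [eventually_ge_atTop (N : ℕ)] with n hn
  exact GLred_eq_of_dvd (Nat.dvd_factorial N.pos hn) (hx _)

lemma GLred_mul_eq_of_coprime {a b : ℕ+} (hab : Nat.Coprime a b) {x y : GL (Fin 2) ZHat}
    (ha : GLred a x = GLred a y) (hb : GLred b x = GLred b y) :
    GLred (a * b) x = GLred (a * b) y := by
  rw [GLred_eq_iff] at ha hb ⊢
  exact fun i j => ZHat.proj_mul_eq_of_coprime hab (ha i j) (hb i j)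

lemma GLred_eq_one_of_away_eq_one {ℓ : ℕ} {m : ℕ+} (hm : ¬ ℓ ∣ m) {x : GL (Fin 2) ZHat}
    (hx : glMap (ZHat.away ℓ) x = 1) : GLred m x = 1 := by
  have hcomp : ((Pi.evalRingHom _ ⟨m, hm⟩).comp (ZHatAway ℓ).subtype).comp (ZHat.away ℓ) =
      ZHat.proj m := rfl
  rw [GLred, ← hcomp, glMap_comp_apply, hx, map_one]

lemma GLred_eq_of_toZModPow_eq {ℓ : ℕ} [Fact ℓ.Prime] {e : ℕ} {x y : GL (Fin 2) ZHat}
    (hxy : glMap ((PadicInt.toZModPow e).comp (ZHat.toPadicInt ℓ)) x =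
      glMap ((PadicInt.toZModPow e).comp (ZHat.toPadicInt ℓ)) y)
    (hx : glMap (ZHat.away ℓ) x = 1) (hy : glMap (ZHat.away ℓ) y = 1)
    {N : ℕ+} (hN : (N : ℕ).factorization ℓ ≤ e) : GLred N x = GLred N y := by
  have hℓ : ℓ.Prime := Fact.out
  have hm := Nat.not_dvd_ordCompl hℓ N.ne_zero
  let a : ℕ+ := ⟨ℓ ^ e, pow_pos hℓ.pos e⟩
  let m : ℕ+ := ⟨N / ℓ ^ (N : ℕ).factorization ℓ, Nat.ordCompl_pos ℓ N.ne_zero⟩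
  have hNam : (N : ℕ) ∣ a * m := by
    conv_lhs => rw [← Nat.ordProj_mul_ordCompl_eq_self N ℓ]
    exact Nat.mul_dvd_mul_right (pow_dvd_pow ℓ hN) _
  refine GLred_eq_of_dvd hNam (GLred_mul_eq_of_coprime ?_ ?_ ?_)
  · exact Nat.Coprime.pow_left e (hℓ.coprime_iff_not_dvd.2 hm)
  · rwa [ZHat.toZModPow_comp_toPadicInt] at hxy
  · rw [GLred_eq_one_of_away_eq_one hm hx, GLred_eq_one_of_away_eq_one hm hy]

/-- Let `G ⊆ GL₂(Ẑ)` be a closed subgroup, `ℓ` a prime and `β ≥ 0`.  Identify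
`GL₂(Ẑ) ≅ GL₂(ℤ_ℓ) × GL₂(ℤ_(ℓ))`.  If for every `γ` with `β ≤ γ ≤ max {β, α_ℓ}`
one has `ker(GL₂(ℤ/ℓ^{γ+1}ℤ) → GL₂(ℤ/ℓ^γℤ)) × {1} ⊆ (π_{ℓ^∞,ℓ^{γ+1}} × id)(G)`,
then `ker(GL₂(ℤ_ℓ) → GL₂(ℤ/ℓ^βℤ)) × {1} ⊆ G`. -/
theorem statement1 (ℓ : ℕ) [Fact ℓ.Prime] (G : Subgroup (GL (Fin 2) ZHat))
    (hGclosed : IsClosed (G : Set (GL (Fin 2) ZHat))) (β : ℕ)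
    (h : ∀ γ : ℕ, β ≤ γ → γ ≤ max β (alphaExp ℓ) →
      ∀ k ∈ (glMap (ZMod.castHom (pow_dvd_pow ℓ (Nat.le_succ γ)) (ZMod (ℓ ^ γ)))).ker,
        ∃ g ∈ G,
          glMap ((PadicInt.toZModPow (p := ℓ) (γ + 1)).comp (ZHat.toPadicInt ℓ)) g = k ∧
          glMap (ZHat.away ℓ) g = 1) :
    ∀ g : GL (Fin 2) ZHat,
      glMap ((PadicInt.toZModPow (p := ℓ) β).comp (ZHat.toPadicInt ℓ)) g = 1 →
      glMap (ZHat.away ℓ) g = 1 → g ∈ G := by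
  intro g hg haway
  let T := G ⊓ (glMap (ZHat.away ℓ)).ker
  have map_map_T (e : ℕ) : (T.map (glMap (ZHat.toPadicInt ℓ))).map (glMap (PadicInt.toZModPow e))
      = T.map (glMap ((PadicInt.toZModPow e).comp (ZHat.toPadicInt ℓ))) := by
    rw [Subgroup.map_map]
    rfl
  have hT : ∀ γ, β ≤ γ → γ ≤ max β (alphaExp ℓ) → (glReduce ℓ γ.le_succ).ker ≤
      (T.map (glMap (ZHat.toPadicInt ℓ))).map (glMap (PadicInt.toZModPow (γ + 1))) := by
    intro γ hβγ hγ k hk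
    obtain ⟨x, hxG, hx, hxaway⟩ := h γ hβγ hγ k hk
    rw [map_map_T]
    exact ⟨x, ⟨hxG, hxaway⟩, hx⟩
  refine mem_of_forall_exists_GLred_eq hGclosed fun N => ?_
  let e := max ((N : ℕ).factorization ℓ) β
  obtain ⟨x, ⟨hxG, hxaway⟩, hx⟩ : glMap ((PadicInt.toZModPow e).comp (ZHat.toPadicInt ℓ)) g ∈
      T.map (glMap ((PadicInt.toZModPow e).comp (ZHat.toPadicInt ℓ))) := by
    rw [← map_map_T]
    refine ker_glReduce_le_map hT (le_max_right _ _) ?_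
    rw [MonoidHom.mem_ker, glMap_comp_apply, glReduce_toZModPow, ← glMap_comp_apply, hg]
  exact ⟨x, hxG, GLred_eq_of_toZModPow_eq hx hxaway haway (le_max_left _ _)⟩
end

section
/- Let ℓ be a prime number, let G ⊆ GL₂(ℤ_ℓ) be a closed subgroup, and let β ≥ 0 be an integer. If for every integer γ with β ≤ γ ≤ max{β, α_ℓ} one has ker(GL₂(ℤ/ℓ^{γ+1}ℤ) → GL₂(ℤ/ℓ^γℤ)) ⊆ G(ℓ^{γ+1}), then ker(GL₂(ℤ_ℓ) → GL₂(ℤ/ℓ^βℤ)) ⊆ G. -/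
/-!
The condition `K_γ(ℓ^{γ+1}) ⊆ G(ℓ^{γ+1})`, where `K_γ` is the kernel of reduction mod `ℓ^γ`,
propagates from `γ` to `γ + 1` once `γ ≥ α_ℓ` by taking `ℓ`-th powers: if
`g ≡ (1 + ℓ^γ A)(1 + ℓ^{γ+1} B)` then `g^ℓ ≡ 1 + ℓ^{γ+1} A` modulo `ℓ^{γ+2}`, because the binomial
terms of degree at least two vanish. Hence every element of `K_β` agrees modulo every `ℓ^n` with an
element of `G`, and so lies in the closure of `G`.
-/

open scoped MatrixGroups

theorem Nat.Prime.pow_dvd_choose_mul_pow {ℓ n i : ℕ} (hℓ : ℓ.Prime) (hn : 1 ≤ n)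
    (h2 : ℓ = 2 → 2 ≤ n) (hi : 2 ≤ i) : ℓ ^ (n + 2) ∣ ℓ.choose i * ℓ ^ (n * i) := by
  by_cases hni : n + 2 ≤ n * i
  · exact (pow_dvd_pow ℓ hni).mul_left _
  obtain ⟨rfl, rfl⟩ : n = 1 ∧ i = 2 := by constructor <;> nlinarith
  -- the missing factor `ℓ` comes from `ℓ ∣ ℓ.choose 2`, which fails for `ℓ = 2`
  have hℓ2 : 2 < ℓ := lt_of_le_of_ne hℓ.two_le fun h => by simpa using h2 h.symm
  rw [one_mul, show 1 + 2 = 2 + 1 from rfl, pow_succ']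
  exact mul_dvd_mul_right (hℓ.dvd_choose_self two_ne_zero hℓ2) (ℓ ^ 2)

section

variable {S : Type*} [Ring S] {ℓ n : ℕ}

theorem Nat.Prime.one_add_pow_mul_pow_self (hℓ : ℓ.Prime) (hn : 1 ≤ n) (h2 : ℓ = 2 → 2 ≤ n)
    (hS : (ℓ : S) ^ (n + 2) = 0) (c : S) :
    (1 + (ℓ : S) ^ n * c) ^ ℓ = 1 + (ℓ : S) ^ (n + 1) * c := by
  have hterm : ∀ i, 2 ≤ i → ((ℓ : S) ^ n * c) ^ i * (ℓ.choose i : S) = 0 := by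
    intro i hi
    obtain ⟨q, hq⟩ := hℓ.pow_dvd_choose_mul_pow hn h2 hi
    rw [((Nat.cast_commute ℓ c).pow_left n).mul_pow, ← pow_mul, mul_assoc,
      ← (Nat.cast_commute _ _).eq, ← mul_assoc, ← Nat.cast_pow, ← Nat.cast_mul, mul_comm, hq,
      Nat.cast_mul, Nat.cast_pow, hS, zero_mul, zero_mul]
  rw [add_comm, (Commute.one_right _).add_pow,
    ← Finset.sum_range_add_sum_Ico _ (by linarith [hℓ.two_le] : 2 ≤ ℓ + 1),
    Finset.sum_eq_zero (s := Finset.Ico 2 (ℓ + 1))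
      fun i hi => by rw [one_pow, mul_one, hterm i (Finset.mem_Ico.1 hi).1]]
  simp [Finset.sum_range_succ, pow_succ, mul_assoc, add_comm, (Nat.cast_commute ℓ c).eq]

theorem Nat.Prime.one_add_pow_mul_mul_one_add_pow_succ_mul_pow_self (hℓ : ℓ.Prime) (hn : 1 ≤ n)
    (h2 : ℓ = 2 → 2 ≤ n) (hS : (ℓ : S) ^ (n + 2) = 0) (a b : S) :
    ((1 + (ℓ : S) ^ n * a) * (1 + (ℓ : S) ^ (n + 1) * b)) ^ ℓ = 1 + (ℓ : S) ^ (n + 1) * a := by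
  have hprod : (1 + (ℓ : S) ^ n * a) * (1 + (ℓ : S) ^ (n + 1) * b) =
      1 + (ℓ : S) ^ n * (a + (ℓ : S) * b + (ℓ : S) ^ (n + 1) * (a * b)) := by
    rw [add_mul, one_mul, mul_add, mul_one, mul_assoc, ← mul_assoc a,
      ((Nat.cast_commute ℓ a).pow_left (n + 1)).eq.symm]
    simp only [mul_add, pow_succ, mul_assoc]
    abel
  rw [hprod, hℓ.one_add_pow_mul_pow_self hn h2 hS, mul_add, mul_add, ← mul_assoc, ← pow_succ, hS,
    ← mul_assoc, ← pow_add, pow_eq_zero_of_le (by omega : n + 2 ≤ n + 1 + (n + 1)) hS, zero_mul,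
    zero_mul, add_zero, add_zero]

end

open Filter Topology

namespace PadicInt

variable {ℓ : ℕ} [Fact ℓ.Prime] {ι : Type*} [Fintype ι] [DecidableEq ι]

local notation "red" k => Matrix.GeneralLinearGroup.map (n := ι) (toZModPow (p := ℓ) k)

theorem mem_ker_map_toZModPow_iff {n : ℕ} {u : GL ι ℤ_[ℓ]} :
    u ∈ (red n).ker ↔ ∃ A : Matrix ι ι ℤ_[ℓ], u.val = 1 + (ℓ : Matrix ι ι ℤ_[ℓ]) ^ n * A := by
  have hmul : ∀ A : Matrix ι ι ℤ_[ℓ], (ℓ : Matrix ι ι ℤ_[ℓ]) ^ n * A = (ℓ : ℤ_[ℓ]) ^ n • A := by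
    intro A
    rw [← Nat.cast_pow, ← nsmul_eq_mul, ← Nat.cast_pow, Nat.cast_smul_eq_nsmul]
  have hdvd : ∀ x : ℤ_[ℓ], toZModPow n x = 0 ↔ (ℓ : ℤ_[ℓ]) ^ n ∣ x := fun x => by
    rw [← RingHom.mem_ker, ker_toZModPow, Ideal.mem_span_singleton]
  set f := toZModPow (p := ℓ) n
  rw [MonoidHom.mem_ker, Units.ext_iff, Matrix.GeneralLinearGroup.val_map_apply,
    Units.val_one, ← sub_eq_zero, ← Matrix.map_one f (map_zero f) (map_one f),
    ← Matrix.map_sub f (map_sub f), ← Matrix.ext_iff]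
  simp_rw [Matrix.map_apply, Matrix.zero_apply, hdvd, Dvd.dvd, hmul, ← sub_eq_iff_eq_add']
  constructor
  · intro h
    choose A hA using h
    exact ⟨Matrix.of A, by ext i j; simp [hA]⟩
  · rintro ⟨A, hA⟩ i j
    refine ⟨A i j, ?_⟩
    simpa using congrFun (congrFun hA i) j

theorem isUnit_one_add_pow_mul {n : ℕ} (hn : 1 ≤ n) (A : Matrix ι ι ℤ_[ℓ]) :
    IsUnit (1 + (ℓ : Matrix ι ι ℤ_[ℓ]) ^ n * A) := by
  have hℓ : (ℓ : Matrix ι ι (ZMod ℓ)) = 0 := by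
    rw [← map_natCast (algebraMap (ZMod ℓ) _), ZMod.natCast_self, map_zero]
  rw [Matrix.isUnit_iff_isUnit_det, ← IsLocalRing.notMem_maximalIdeal, ← ker_toZMod,
    RingHom.mem_ker, RingHom.map_det, map_add, map_one, map_mul, map_pow, map_natCast, hℓ,
    zero_pow (by omega), zero_mul, add_zero, Matrix.det_one]
  exact one_ne_zero

theorem map_castHom_map_toZModPow {m n : ℕ} (h : m ≤ n) (u : GL ι ℤ_[ℓ]) :
    Matrix.GeneralLinearGroup.map (ZMod.castHom (pow_dvd_pow ℓ h) (ZMod (ℓ ^ m))) ((red n) u) =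
      (red m) u := by
  rw [← MonoidHom.comp_apply, ← Matrix.GeneralLinearGroup.map_comp,
    zmod_cast_comp_toZModPow _ _ h]

theorem map_ker_succ_le_of_map_ker_le {G : Subgroup (GL ι ℤ_[ℓ])} {n : ℕ} (hn : 1 ≤ n)
    (h2 : ℓ = 2 → 2 ≤ n)
    (hG : (red n).ker.map (red (n + 1)) ≤ G.map (red (n + 1))) :
    (red (n + 1)).ker.map (red (n + 2)) ≤ G.map (red (n + 2)) := by
  rintro _ ⟨x, hx, rfl⟩
  obtain ⟨A, hxA⟩ := mem_ker_map_toZModPow_iff.1 hx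
  obtain ⟨y, hyA⟩ : ∃ y : GL ι ℤ_[ℓ], y.val = 1 + (ℓ : Matrix ι ι ℤ_[ℓ]) ^ n * A :=
    ⟨(isUnit_one_add_pow_mul hn A).unit, rfl⟩
  obtain ⟨g, hgG, hgy⟩ := hG ⟨y, mem_ker_map_toZModPow_iff.2 ⟨A, hyA⟩, rfl⟩
  have hyg : y⁻¹ * g ∈ (red (n + 1)).ker := by
    rw [MonoidHom.mem_ker, map_mul, map_inv, hgy, inv_mul_cancel]
  obtain ⟨B, hB⟩ := mem_ker_map_toZModPow_iff.1 hyg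
  have hg : g.val =
      (1 + (ℓ : Matrix ι ι ℤ_[ℓ]) ^ n * A) * (1 + (ℓ : Matrix ι ι ℤ_[ℓ]) ^ (n + 1) * B) := by
    rw [← hyA, ← hB, ← Units.val_mul, mul_inv_cancel_left]
  have hnil : (ℓ : Matrix ι ι (ZMod (ℓ ^ (n + 2)))) ^ (n + 2) = 0 := by
    rw [← Nat.cast_pow, ← map_natCast (algebraMap (ZMod (ℓ ^ (n + 2))) _), ZMod.natCast_self,
      map_zero]
  refine ⟨g ^ ℓ, pow_mem hgG ℓ, Units.ext ?_⟩
  rw [map_pow, Units.val_pow_eq_pow_val, Matrix.GeneralLinearGroup.val_map_apply,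
    Matrix.GeneralLinearGroup.val_map_apply, ← RingHom.mapMatrix_apply, ← RingHom.mapMatrix_apply,
    hg, hxA]
  simp only [map_mul, map_add, map_one, map_pow, map_natCast]
  exact (Fact.out : ℓ.Prime).one_add_pow_mul_mul_one_add_pow_succ_mul_pow_self hn h2 hnil _ _

theorem map_ker_le_ker_castHom (n : ℕ) :
    (red n).ker.map (red (n + 1)) ≤
      (Matrix.GeneralLinearGroup.map
        (ZMod.castHom (pow_dvd_pow ℓ n.le_succ) (ZMod (ℓ ^ n)))).ker := by
  rintro _ ⟨x, hx, rfl⟩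
  rwa [MonoidHom.mem_ker, map_castHom_map_toZModPow n.le_succ]

theorem exists_mem_map_eq_of_map_ker_le {G : Subgroup (GL ι ℤ_[ℓ])} {β : ℕ}
    (hG : ∀ n, β ≤ n → (red n).ker.map (red (n + 1)) ≤ G.map (red (n + 1)))
    {x : GL ι ℤ_[ℓ]} (hx : x ∈ (red β).ker) (n : ℕ) : ∃ g ∈ G, (red n) g = (red n) x := by
  suffices h : ∀ n, β ≤ n → ∃ g ∈ G, (red n) g = (red n) x by
    obtain ⟨g, hgG, hgx⟩ := h (max n β) (le_max_right n β)
    refine ⟨g, hgG, ?_⟩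
    rw [← map_castHom_map_toZModPow (le_max_left n β), hgx,
      map_castHom_map_toZModPow (le_max_left n β)]
  intro n hn
  induction n, hn using Nat.le_induction with
  | base => exact ⟨1, one_mem G, by rw [map_one, MonoidHom.mem_ker.1 hx]⟩
  | succ n hn ih =>
    obtain ⟨g, hgG, hgx⟩ := ih
    obtain ⟨g', hg'G, hg'⟩ := hG n hn
      ⟨g⁻¹ * x, MonoidHom.mem_ker.2 (by rw [map_mul, map_inv, hgx, inv_mul_cancel]), rfl⟩
    exact ⟨g * g', mul_mem hgG hg'G, by rw [map_mul, hg', ← map_mul, mul_inv_cancel_left]⟩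

theorem tendsto_of_toZModPow_eq {a : ℕ → ℤ_[ℓ]} {b : ℤ_[ℓ]}
    (h : ∀ n, toZModPow n (a n) = toZModPow n b) : Tendsto a atTop (𝓝 b) := by
  have hℓ : 1 < (ℓ : ℝ) := Nat.one_lt_cast.2 (Fact.out : ℓ.Prime).one_lt
  rw [tendsto_iff_norm_sub_tendsto_zero]
  refine squeeze_zero (fun n => norm_nonneg _) (fun n => ?_)
    (tendsto_pow_atTop_nhds_zero_of_lt_one (by positivity) (inv_lt_one_of_one_lt₀ hℓ))
  rw [inv_pow, ← zpow_natCast, ← zpow_neg, norm_le_pow_iff_mem_span_pow, ← ker_toZModPow,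
    RingHom.mem_ker, map_sub, h, sub_self]

theorem tendsto_of_map_toZModPow_eq {u : ℕ → GL ι ℤ_[ℓ]} {v : GL ι ℤ_[ℓ]}
    (h : ∀ n, (red n) (u n) = (red n) v) : Tendsto u atTop (𝓝 v) := by
  have hval : ∀ {w : ℕ → GL ι ℤ_[ℓ]} {z : GL ι ℤ_[ℓ]}, (∀ n, (red n) (w n) = (red n) z) →
      Tendsto (fun n => (w n).val) atTop (𝓝 z.val) := fun hw =>
    tendsto_pi_nhds.2 fun i => tendsto_pi_nhds.2 fun j => tendsto_of_toZModPow_eq fun n => by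
      simpa using congrArg (fun g : GL ι (ZMod (ℓ ^ n)) => g i j) (hw n)
  rw [Units.isEmbedding_embedProduct.tendsto_nhds_iff]
  exact (hval h).prodMk_nhds ((MulOpposite.continuous_op.tendsto _).comp
    (hval (w := fun n => (u n)⁻¹) fun n => by rw [map_inv, map_inv, h]))

end PadicInt

open PadicInt in
/-- Let `ℓ` be a prime, `G ⊆ GL₂(ℤ_ℓ)` a closed subgroup and `β ≥ 0`.  If for every
`γ` with `β ≤ γ ≤ max {β, α_ℓ}` one has
`ker(GL₂(ℤ/ℓ^{γ+1}ℤ) → GL₂(ℤ/ℓ^γℤ)) ⊆ G(ℓ^{γ+1})`, then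
`ker(GL₂(ℤ_ℓ) → GL₂(ℤ/ℓ^βℤ)) ⊆ G`. -/
theorem statement2 (ℓ : ℕ) [Fact ℓ.Prime] (G : Subgroup (GL (Fin 2) ℤ_[ℓ]))
    (hGclosed : IsClosed (G : Set (GL (Fin 2) ℤ_[ℓ]))) (β : ℕ)
    (h : ∀ γ : ℕ, β ≤ γ → γ ≤ max β (alphaExp ℓ) →
      (glMap (ZMod.castHom (pow_dvd_pow ℓ (Nat.le_succ γ)) (ZMod (ℓ ^ γ)))).ker ≤
        Subgroup.map (glMap (PadicInt.toZModPow (p := ℓ) (γ + 1))) G) :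
    (glMap (PadicInt.toZModPow (p := ℓ) β)).ker ≤ G := by
  intro x hx
  have hα : 1 ≤ alphaExp ℓ ∧ (ℓ = 2 → alphaExp ℓ = 2) := by
    unfold alphaExp; split_ifs <;> simp_all
  have hG : ∀ n, β ≤ n → (glMap (toZModPow (p := ℓ) n)).ker.map (glMap (toZModPow (n + 1))) ≤
      G.map (glMap (toZModPow (n + 1))) := by
    intro n hn
    induction n, hn using Nat.le_induction with
    | base => exact (map_ker_le_ker_castHom β).trans (h β le_rfl (le_max_left _ _))
    | succ n hn ih =>
      by_cases hnα : n + 1 ≤ max β (alphaExp ℓ)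
      · exact (map_ker_le_ker_castHom (n + 1)).trans (h (n + 1) (by omega) hnα)
      · exact map_ker_succ_le_of_map_ker_le (by omega) (fun h2 => by have := hα.2 h2; omega) ih
  choose g hgG hgx using exists_mem_map_eq_of_map_ker_le hG hx
  exact hGclosed.mem_of_tendsto (tendsto_of_map_toZModPow_eq hgx) (Eventually.of_forall hgG)
end

section
/- Let ℓ ≥ 5 be a prime number and let G ⊆ GL₂(ℤ_ℓ) be a closed subgroup. If SL₂(ℤ/ℓℤ) ⊆ G(ℓ), then SL₂(ℤ_ℓ) ⊆ G. -/
open scoped MatrixGroups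

/-!
Let `S ⊆ SL₂(ℤ_ℓ)` be the preimage of `G`. Commutators in `G` have determinant one, so `S` maps
onto the commutator subgroup of `SL₂(𝔽_ℓ)`, which is all of it as `ℓ ≥ 5`.

If `g ∈ S` reduces to `1 + N` with `N² = 0`, then `g ^ ℓ ^ (k + 1) ≡ 1 + ℓ ^ (k + 1) N` modulo
`ℓ ^ (k + 2)`: in `(1 + M) ^ ℓ` the prime `ℓ` divides the inner binomial coefficients and, as
`ℓ ≥ 4`, the last term `M ^ ℓ` is a multiple of `(M ^ 2) ^ 2`. The square-zero matrices
`!![1, 1; -1, -1]`, `E₁₂`, `E₂₁` span the trace-zero matrices, and `det (1 + ℓ ^ (k + 1) A) = 1`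
forces `trace A ≡ 0 mod ℓ`; hence every element of `SL₂(ℤ_ℓ)` that is `≡ 1 mod ℓ ^ (k + 1)` is
congruent modulo `ℓ ^ (k + 2)` to an element of `S`. By induction `S` is dense in `SL₂(ℤ_ℓ)`, and
it is closed.
-/

open Filter Topology Pointwise
open scoped commutatorElement

section PrimePow

variable {R A : Type*} [CommRing R] [Ring A] [Algebra R A]

theorem mul_natCast_eq_smul (X : A) (n : ℕ) : X * (n : A) = (n : R) • X := by
  rw [← nsmul_eq_mul', Nat.cast_smul_eq_nsmul]

theorem one_add_pow_prime_eq {p : ℕ} (hp : p.Prime) (hp5 : 5 ≤ p) {M D : A} {m : ℕ}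
    (hM : M * M = (p : R) ^ (m + 1) • D) :
    ∃ E : A, (1 + M) ^ p = 1 + (p : R) • M + (p : R) ^ (m + 2) • E := by
  set I : Submodule R A := (p : R) ^ (m + 2) • ⊤
  have hpow : ∀ j, M ^ (j + 2) = (p : R) ^ (m + 1) • (M ^ j * D) := fun j => by
    rw [pow_add, sq, hM, mul_smul_comm]
  have hterm : ∀ i ∈ Finset.range (p - 1), M ^ (i + 2) * (p.choose (i + 2) : A) ∈ I := by
    intro i hi
    rw [Submodule.mem_smul_pointwise_iff_exists, mul_natCast_eq_smul (R := R)]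
    rcases Nat.lt_or_ge (i + 2) p with hlt | hge
    · obtain ⟨k, hk⟩ := hp.dvd_choose_self (by omega) hlt
      refine ⟨(k : R) • (M ^ i * D), trivial, ?_⟩
      rw [hk, hpow, Nat.cast_mul, smul_smul, smul_smul]
      ring_nf
    · have hip : i + 2 = p := by have := Finset.mem_range.mp hi; omega
      refine ⟨(p : R) ^ m • (M ^ (i - 2) * D * D), trivial, ?_⟩
      rw [show p.choose (i + 2) = 1 by rw [hip, Nat.choose_self], Nat.cast_one, one_smul,
        show i + 2 = i - 2 + 2 + 2 by omega, hpow, hpow, smul_mul_assoc, smul_smul, smul_smul]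
      ring_nf
  obtain ⟨E, -, hE⟩ :=
    (Submodule.mem_smul_pointwise_iff_exists _ _ _).mp (Submodule.sum_mem I hterm)
  refine ⟨E, ?_⟩
  rw [add_comm 1 M, (Commute.one_right M).add_pow, show p + 1 = p - 1 + 1 + 1 by omega,
    Finset.sum_range_succ', Finset.sum_range_succ', hE, pow_zero, zero_add, pow_one,
    Nat.choose_zero_right, Nat.choose_one_right, Nat.cast_one, mul_one]
  simp only [one_pow, mul_one, mul_natCast_eq_smul (R := R) M p]
  abel

theorem one_add_add_smul_pow_prime_pow_eq {p : ℕ} (hp : p.Prime) (hp5 : 5 ≤ p) {X D : A}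
    (hX : X * X = (p : R) • D) (B : A) (n : ℕ) :
    ∃ B' : A, (1 + X + (p : R) • B) ^ (p ^ n) = 1 + (p : R) ^ n • X + (p : R) ^ (n + 1) • B' := by
  induction n with
  | zero => exact ⟨B, by simp⟩
  | succ n ih =>
    obtain ⟨B', hB'⟩ := ih
    set M := (p : R) ^ n • X + (p : R) ^ (n + 1) • B'
    have hM : M * M = (p : R) ^ (2 * n + 1) • (D + (X * B' + B' * X) + (p : R) • (B' * B')) := by
      simp only [M, add_mul, mul_add, smul_mul_assoc, mul_smul_comm, smul_smul, hX, smul_add]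
      module
    obtain ⟨E, hE⟩ := one_add_pow_prime_eq hp hp5 hM
    refine ⟨B' + (p : R) ^ n • E, ?_⟩
    rw [pow_succ, pow_mul, hB', add_assoc, hE]
    module

theorem exists_one_add_pow_smul_mul_one_add_pow_smul (r : R) (k : ℕ) (X Y U V : A) :
    ∃ W : A, (1 + r ^ (k + 1) • X + r ^ (k + 2) • U) * (1 + r ^ (k + 1) • Y + r ^ (k + 2) • V)
      = 1 + r ^ (k + 1) • (X + Y) + r ^ (k + 2) • W :=
  ⟨U + V + r ^ k • (X * Y) + r ^ (k + 1) • (X * V + U * Y) + r ^ (k + 2) • (U * V), by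
    simp only [add_mul, mul_add, smul_mul_assoc, mul_smul_comm, one_mul, mul_one]
    module⟩

end PrimePow

theorem Matrix.exists_eq_add_smul_of_dvd {m n R : Type*} [CommRing R] {r : R}
    {A B : Matrix m n R} (h : ∀ i j, r ∣ A i j - B i j) : ∃ C : Matrix m n R, A = B + r • C := by
  choose C hC using h
  exact ⟨Matrix.of C, by ext i j; simp [← hC]⟩

theorem Matrix.det_one_add_smul_fin_two {R : Type*} [CommRing R] (s : R)
    (A : Matrix (Fin 2) (Fin 2) R) : (1 + s • A).det = 1 + s * A.trace + s ^ 2 * A.det := by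
  simp [Matrix.det_fin_two, Matrix.trace_fin_two]
  ring

theorem glMap_toGL {R S : Type*} [CommRing R] [CommRing S] (f : R →+* S) (g : SL(2, R)) :
    glMap f (Matrix.SpecialLinearGroup.toGL g) =
      Matrix.SpecialLinearGroup.toGL (Matrix.SpecialLinearGroup.map f g) :=
  Units.ext rfl

theorem map_comap_toGL_eq_top_of_SL2subgroup_le_map {R K : Type*} [CommRing R] [Field K]
    (f : R →+* K) {a : K} (ha : a ≠ 0) (ha2 : a ^ 2 ≠ 1) {G : Subgroup (GL (Fin 2) R)}
    (hG : SL2subgroup K ≤ G.map (glMap f)) :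
    (G.comap Matrix.SpecialLinearGroup.toGL).map (Matrix.SpecialLinearGroup.map f) = ⊤ := by
  rw [eq_top_iff, ← Matrix.SL2.commutator_eq_top ha ha2]
  refine Subgroup.commutator_le.mpr fun p _ q _ => ?_
  obtain ⟨gp, hgp, hp⟩ := hG ⟨p, rfl⟩
  obtain ⟨gq, hgq, hq⟩ := hG ⟨q, rfl⟩
  have hdet : Matrix.GeneralLinearGroup.det ⁅gp, gq⁆ = 1 := by
    rw [map_commutatorElement, commutatorElement_eq_one_iff_commute]
    exact Commute.all _ _
  obtain ⟨c, hc⟩ : ⁅gp, gq⁆ ∈ Set.range Matrix.SpecialLinearGroup.toGL := by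
    rw [Matrix.SpecialLinearGroup.range_toGL]
    exact hdet
  refine ⟨c, ?_, Matrix.SpecialLinearGroup.toGL_injective ?_⟩
  · change Matrix.SpecialLinearGroup.toGL c ∈ G
    rw [hc, commutatorElement_def]
    exact G.mul_mem (G.mul_mem (G.mul_mem hgp hgq) (G.inv_mem hgp)) (G.inv_mem hgq)
  · rw [← glMap_toGL, hc, map_commutatorElement, hp, hq, map_commutatorElement]

namespace PadicInt

variable {ℓ : ℕ} [Fact ℓ.Prime]

local notation "π" => ((ℓ : ℕ) : ℤ_[ℓ])
local notation "M₂" => Matrix (Fin 2) (Fin 2) ℤ_[ℓ]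

theorem tendsto_pow_mul_atTop_nhds_zero (c : ℕ → ℤ_[ℓ]) :
    Tendsto (fun n => π ^ n * c n) atTop (𝓝 0) := by
  have hπ : ‖π‖ < 1 := by
    rw [norm_p]
    exact inv_lt_one_of_one_lt₀ (Nat.one_lt_cast.mpr (Fact.out : ℓ.Prime).one_lt)
  refine squeeze_zero_norm (fun n => ?_) (tendsto_pow_atTop_nhds_zero_of_lt_one (norm_nonneg _) hπ)
  rw [norm_mul, norm_pow]
  exact mul_le_of_le_one_right (by positivity) (norm_le_one _)

theorem tendsto_add_pow_smul_atTop_nhds (x : M₂) (C : ℕ → M₂) :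
    Tendsto (fun n => x + π ^ (n + 1) • C n) atTop (𝓝 x) := by
  conv_rhs => rw [← add_zero x]
  refine tendsto_const_nhds.add (tendsto_pi_nhds.mpr fun i => tendsto_pi_nhds.mpr fun j => ?_)
  exact (tendsto_pow_mul_atTop_nhds_zero (fun n => C (n - 1) i j)).comp (tendsto_add_atTop_nat 1)

variable {S : Subgroup SL(2, ℤ_[ℓ])}
  (hS : S.map (Matrix.SpecialLinearGroup.map toZMod) = ⊤)
include hS

theorem exists_mem_eq_add_smul (x : SL(2, ℤ_[ℓ])) : ∃ g ∈ S, ∃ C : M₂, (g : M₂) = x + π • C := by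
  obtain ⟨g, hg, hgx⟩ := (Subgroup.eq_top_iff' _).mp hS (Matrix.SpecialLinearGroup.map toZMod x)
  refine ⟨g, hg, Matrix.exists_eq_add_smul_of_dvd fun i j => ?_⟩
  rw [← Ideal.mem_span_singleton, ← maximalIdeal_eq_span_p, ← ker_toZMod, RingHom.mem_ker,
    map_sub, sub_eq_zero]
  simpa using congr_fun₂ (congr_arg Subtype.val hgx) i j

variable (hℓ : 5 ≤ ℓ)
include hℓ

theorem exists_mem_eq_one_add_pow_smul {N : M₂} (hN : N * N = 0) (hdet : (1 + N).det = 1)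
    (k : ℕ) : ∃ g ∈ S, ∃ B : M₂, (g : M₂) = 1 + π ^ (k + 1) • N + π ^ (k + 2) • B := by
  obtain ⟨g, hg, C, hC⟩ := exists_mem_eq_add_smul hS ⟨1 + N, hdet⟩
  obtain ⟨B, hB⟩ := one_add_add_smul_pow_prime_pow_eq (Fact.out : ℓ.Prime) hℓ
    (show N * N = π • 0 by rw [hN, smul_zero]) C (k + 1)
  refine ⟨g ^ ℓ ^ (k + 1), S.pow_mem hg _, B, ?_⟩
  rw [Matrix.SpecialLinearGroup.coe_pow, hC, ← hB]

theorem exists_mem_eq_one_add_pow_smul_of_trace_eq_zero (a b c : ℤ_[ℓ]) (k : ℕ) :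
    ∃ g ∈ S, ∃ B : M₂, (g : M₂) = 1 + π ^ (k + 1) • !![a, b; c, -a] + π ^ (k + 2) • B := by
  obtain ⟨g₁, hg₁, B₁, h₁⟩ := exists_mem_eq_one_add_pow_smul hS hℓ (N := !![a, a; -a, -a])
    (by rw [Matrix.mul_fin_two]; ext i j; fin_cases i <;> fin_cases j <;> simp)
    (by simp [Matrix.det_fin_two]; ring) k
  obtain ⟨g₂, hg₂, B₂, h₂⟩ := exists_mem_eq_one_add_pow_smul hS hℓ (N := !![0, b - a; 0, 0])
    (by rw [Matrix.mul_fin_two]; ext i j; fin_cases i <;> fin_cases j <;> simp)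
    (by simp [Matrix.det_fin_two]) k
  obtain ⟨g₃, hg₃, B₃, h₃⟩ := exists_mem_eq_one_add_pow_smul hS hℓ (N := !![0, 0; c + a, 0])
    (by rw [Matrix.mul_fin_two]; ext i j; fin_cases i <;> fin_cases j <;> simp)
    (by simp [Matrix.det_fin_two]) k
  obtain ⟨W, hW⟩ := exists_one_add_pow_smul_mul_one_add_pow_smul π k _ _ B₁ B₂
  obtain ⟨W', hW'⟩ := exists_one_add_pow_smul_mul_one_add_pow_smul π k _ _ W B₃
  refine ⟨g₁ * g₂ * g₃, S.mul_mem (S.mul_mem hg₁ hg₂) hg₃, W', ?_⟩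
  rw [Matrix.SpecialLinearGroup.coe_mul, Matrix.SpecialLinearGroup.coe_mul, h₁, h₂, h₃, hW, hW']
  congr 3
  ext i j
  fin_cases i <;> fin_cases j <;> simp

theorem exists_mem_eq_add_pow_smul_of_eq_one_add {u : SL(2, ℤ_[ℓ])} {A : M₂} {k : ℕ}
    (hu : (u : M₂) = 1 + π ^ (k + 1) • A) :
    ∃ h ∈ S, ∃ B : M₂, (h : M₂) = u + π ^ (k + 2) • B := by
  have hπ : π ^ (k + 1) ≠ 0 := pow_ne_zero _ (Nat.cast_ne_zero.mpr (Fact.out : ℓ.Prime).ne_zero)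
  obtain ⟨t, ht⟩ : ∃ t, A 0 0 + A 1 1 = π * t := by
    have hdet : (1 + π ^ (k + 1) • A).det = 1 := hu ▸ u.2
    rw [Matrix.det_one_add_smul_fin_two, Matrix.trace_fin_two] at hdet
    refine ⟨-(π ^ k * A.det), mul_left_cancel₀ hπ ?_⟩
    linear_combination hdet
  obtain ⟨h, hh, B, hB⟩ :=
    exists_mem_eq_one_add_pow_smul_of_trace_eq_zero hS hℓ (A 0 0) (A 0 1) (A 1 0) k
  have hA : A = !![A 0 0, A 0 1; A 1 0, -A 0 0] + π • !![0, 0; 0, t] := by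
    ext i j
    fin_cases i <;> fin_cases j <;> simp
    linear_combination ht
  refine ⟨h, hh, B - !![0, 0; 0, t], ?_⟩
  rw [hB]
  conv_rhs => rw [hu, hA]
  module

theorem exists_mem_eq_add_pow_smul (x : SL(2, ℤ_[ℓ])) (n : ℕ) :
    ∃ g ∈ S, ∃ C : M₂, (g : M₂) = x + π ^ (n + 1) • C := by
  induction n with
  | zero => simpa using exists_mem_eq_add_smul hS x
  | succ n ih =>
    obtain ⟨g, hg, C, hC⟩ := ih
    have hu : ((g⁻¹ * x : SL(2, ℤ_[ℓ])) : M₂) =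
        1 + π ^ (n + 1) • -((g⁻¹ : SL(2, ℤ_[ℓ])) * C) := by
      rw [Matrix.SpecialLinearGroup.coe_mul, eq_sub_of_add_eq hC.symm, mul_sub,
        ← Matrix.SpecialLinearGroup.coe_mul, inv_mul_cancel, Matrix.SpecialLinearGroup.coe_one,
        mul_smul_comm, smul_neg, sub_eq_add_neg]
    obtain ⟨h, hh, B, hB⟩ := exists_mem_eq_add_pow_smul_of_eq_one_add hS hℓ hu
    refine ⟨g * h, S.mul_mem hg hh, (g : M₂) * B, ?_⟩
    rw [Matrix.SpecialLinearGroup.coe_mul, hB, mul_add, ← Matrix.SpecialLinearGroup.coe_mul,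
      mul_inv_cancel_left, mul_smul_comm]

theorem eq_top_of_isClosed (hSc : IsClosed (S : Set SL(2, ℤ_[ℓ]))) : S = ⊤ := by
  refine eq_top_iff.mpr fun x _ => ?_
  choose g hg C hC using exists_mem_eq_add_pow_smul hS hℓ x
  refine hSc.mem_of_tendsto (f := g) (b := atTop) (tendsto_subtype_rng.mpr ?_)
    (Eventually.of_forall hg)
  simp_rw [hC]
  exact tendsto_add_pow_smul_atTop_nhds _ C

end PadicInt

/-- Let `ℓ ≥ 5` be a prime and `G ⊆ GL₂(ℤ_ℓ)` a closed subgroup.  If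
`SL₂(ℤ/ℓℤ) ⊆ G(ℓ)` then `SL₂(ℤ_ℓ) ⊆ G`. -/
theorem statement4 (ℓ : ℕ) [Fact ℓ.Prime] (hℓ : 5 ≤ ℓ) (G : Subgroup (GL (Fin 2) ℤ_[ℓ]))
    (hGclosed : IsClosed (G : Set (GL (Fin 2) ℤ_[ℓ])))
    (hSL : SL2subgroup (ZMod ℓ) ≤ Subgroup.map (glMap (PadicInt.toZMod (p := ℓ))) G) :
    SL2subgroup ℤ_[ℓ] ≤ G := by
  have hcast_ne_zero : ∀ k : ℕ, 0 < k → k < ℓ → (k : ZMod ℓ) ≠ 0 := fun k hk hkℓ => by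
    rw [Ne, ZMod.natCast_eq_zero_iff]
    exact Nat.not_dvd_of_pos_of_lt hk hkℓ
  have h2 : (2 : ZMod ℓ) ≠ 0 := by exact_mod_cast hcast_ne_zero 2 (by norm_num) (by omega)
  have h4 : (2 : ZMod ℓ) ^ 2 ≠ 1 := fun h =>
    hcast_ne_zero 3 (by norm_num) (by omega) (by push_cast; linear_combination h)
  have hS := PadicInt.eq_top_of_isClosed
    (map_comap_toGL_eq_top_of_SL2subgroup_le_map _ h2 h4 hSL) hℓ
    (hGclosed.preimage Matrix.SpecialLinearGroup.continuous_toGL)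
  rintro _ ⟨x, rfl⟩
  exact (Subgroup.eq_top_iff' _).mp hS x
end

section
/- Let G ⊆ GL₂(ℤ₂) be a closed subgroup. If G(4) = GL₂(ℤ/4ℤ), then either G = GL₂(ℤ₂) or the index [GL₂(ℤ/8ℤ) : G(8)] equals 2. -/
open scoped MatrixGroups

namespace St6

abbrev c84 : ZMod (2^3) →+* ZMod (2^2) := ZMod.castHom (pow_dvd_pow 2 (by norm_num : 2 ≤ 3)) _

def klift (A : Matrix (Fin 2) (Fin 2) (ZMod 2)) : Matrix (Fin 2) (Fin 2) (ZMod (2^3)) :=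
  Matrix.of fun i j => (1 : Matrix (Fin 2) (Fin 2) (ZMod (2^3))) i j + 4 * ((A i j).val : ZMod (2^3))

lemma klift_add : ∀ A B : Matrix (Fin 2) (Fin 2) (ZMod 2),
    klift (A + B) = klift A * klift B := by decide

lemma klift_self : ∀ A : Matrix (Fin 2) (Fin 2) (ZMod 2), klift A * klift A = 1 := by decide

lemma klift_inj : ∀ A B : Matrix (Fin 2) (Fin 2) (ZMod 2), klift A = klift B → A = B := by decide

lemma klift_map : ∀ A : Matrix (Fin 2) (Fin 2) (ZMod 2), (klift A).map c84 = 1 := by decide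

/-- `1 + 4A` as an element of `GL₂(ℤ/8)`. -/
def kel (A : Matrix (Fin 2) (Fin 2) (ZMod 2)) : GL (Fin 2) (ZMod (2^3)) :=
  ⟨klift A, klift A, klift_self A, klift_self A⟩

lemma kel_mul (A B : Matrix (Fin 2) (Fin 2) (ZMod 2)) : kel (A + B) = kel A * kel B :=
  Units.ext (klift_add A B)

lemma kel_inj : Function.Injective kel := fun A B h => klift_inj A B (congrArg Units.val h)

lemma kel_ker (A : Matrix (Fin 2) (Fin 2) (ZMod 2)) : glMap c84 (kel A) = 1 :=
  Units.ext (klift_map A)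

section

variable (H : Subgroup (GL (Fin 2) (ZMod (2^3))))
  (hH : Subgroup.map (glMap c84) H = ⊤)

include hH

lemma sq_mem (W : Matrix (Fin 2) (Fin 2) (ZMod (2^2))) (hW : W * W = 1)
    (X : Matrix (Fin 2) (Fin 2) (ZMod 2))
    (key : ∀ a b c d : ZMod (2^3), c84 a = W 0 0 → c84 b = W 0 1 → c84 c = W 1 0 →
      c84 d = W 1 1 → !![a,b;c,d] * !![a,b;c,d] = klift X) :
    kel X ∈ H := by
  have hw : (⟨W, W, hW, hW⟩ : GL (Fin 2) (ZMod (2^2))) ∈ Subgroup.map (glMap c84) H := by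
    rw [hH]; trivial
  obtain ⟨h, hh, hfh⟩ := hw
  have hval : (h.val).map c84 = W := congrArg Units.val hfh
  have e : ∀ i j, c84 (h.val i j) = W i j := fun i j => by
    rw [← Matrix.map_apply (f := (c84 : ZMod (2^3) → ZMod (2^2))), hval]
  have hmat : h.val = !![h.val 0 0, h.val 0 1; h.val 1 0, h.val 1 1] := by
    ext i j; fin_cases i <;> fin_cases j <;> simp
  have hsq : h * h = kel X := by
    apply Units.ext
    show h.val * h.val = klift X
    rw [hmat]
    exact key _ _ _ _ (e 0 0) (e 0 1) (e 1 0) (e 1 1)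
  exact hsq ▸ mul_mem hh hh

lemma gen12_mem : kel !![0,1;0,0] ∈ H := by
  refine sq_mem H hH !![1,2;0,1] (by decide) _ ?_
  have : ∀ a b c d : ZMod (2^3), c84 a = 1 → c84 b = 2 → c84 c = 0 →
      c84 d = 1 → !![a,b;c,d] * !![a,b;c,d] = klift !![0,1;0,0] := by decide
  intro a b c d ha hb hc hd
  exact this a b c d (by simpa using ha) (by simpa using hb) (by simpa using hc)
    (by simpa using hd)

lemma gen21_mem : kel !![0,0;1,0] ∈ H := by
  refine sq_mem H hH !![1,0;2,1] (by decide) _ ?_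
  have : ∀ a b c d : ZMod (2^3), c84 a = 1 → c84 b = 0 → c84 c = 2 →
      c84 d = 1 → !![a,b;c,d] * !![a,b;c,d] = klift !![0,0;1,0] := by decide
  intro a b c d ha hb hc hd
  exact this a b c d (by simpa using ha) (by simpa using hb) (by simpa using hc)
    (by simpa using hd)

lemma genJ_mem : kel !![1,1;1,1] ∈ H := by
  refine sq_mem H hH !![1,2;2,1] (by decide) _ ?_
  have : ∀ a b c d : ZMod (2^3), c84 a = 1 → c84 b = 2 → c84 c = 2 →
      c84 d = 1 → !![a,b;c,d] * !![a,b;c,d] = klift !![1,1;1,1] := by decide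
  intro a b c d ha hb hc hd
  exact this a b c d (by simpa using ha) (by simpa using hb) (by simpa using hc)
    (by simpa using hd)

omit hH in
lemma kel_one : kel 0 = 1 := by
  apply Units.ext
  show klift 0 = 1
  decide

lemma kel_trace_mem (A : Matrix (Fin 2) (Fin 2) (ZMod 2)) (hA : A.trace = 0) : kel A ∈ H := by
  have h1 := gen12_mem H hH
  have h2 := gen21_mem H hH
  have h3 := genJ_mem H hH
  have hI : kel !![1,0;0,1] ∈ H := by
    have : (!![1,0;0,1] : Matrix (Fin 2) (Fin 2) (ZMod 2))
        = !![0,1;0,0] + (!![0,0;1,0] + !![1,1;1,1]) := by decide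
    rw [this, kel_mul, kel_mul]
    exact mul_mem h1 (mul_mem h2 h3)
  have hcases : ∀ B : Matrix (Fin 2) (Fin 2) (ZMod 2), B.trace = 0 →
      B = 0 ∨ B = !![0,1;0,0] ∨ B = !![0,0;1,0] ∨ B = !![1,0;0,1]
      ∨ B = !![0,1;0,0] + !![0,0;1,0] ∨ B = !![1,0;0,1] + !![0,1;0,0]
      ∨ B = !![1,0;0,1] + !![0,0;1,0] ∨ B = !![1,0;0,1] + (!![0,1;0,0] + !![0,0;1,0]) := by
    decide
  rcases hcases A hA with h|h|h|h|h|h|h|h <;> rw [h]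
  · rw [kel_one]; exact one_mem H
  · exact h1
  · exact h2
  · exact hI
  · rw [kel_mul]; exact mul_mem h1 h2
  · rw [kel_mul]; exact mul_mem hI h1
  · rw [kel_mul]; exact mul_mem hI h2
  · rw [kel_mul, kel_mul]; exact mul_mem hI (mul_mem h1 h2)

lemma index_le_two : H.index ≤ 2 := by
  set f := (glMap c84) with hf
  have fsurj : Function.Surjective f := by
    intro y
    have : y ∈ Subgroup.map f H := by rw [hH]; trivial
    obtain ⟨x, _, hx⟩ := this
    exact ⟨x, hx⟩
  set f' := f.comp H.subtype with hf'
  have f'surj : Function.Surjective f' := by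
    intro y
    have : y ∈ Subgroup.map f H := by rw [hH]; trivial
    obtain ⟨x, hx, hfx⟩ := this
    exact ⟨⟨x, hx⟩, hfx⟩
  -- cardinalities
  have hcard1 : Nat.card (GL (Fin 2) (ZMod (2^3)))
      = Nat.card (GL (Fin 2) (ZMod (2^2))) * Nat.card f.ker := by
    rw [Subgroup.card_eq_card_quotient_mul_card_subgroup f.ker]
    congr 1
    exact Nat.card_congr (QuotientGroup.quotientKerEquivOfSurjective f fsurj).toEquiv
  have hcard2 : Nat.card H = Nat.card (GL (Fin 2) (ZMod (2^2))) * Nat.card f'.ker := by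
    rw [Subgroup.card_eq_card_quotient_mul_card_subgroup f'.ker]
    congr 1
    exact Nat.card_congr (QuotientGroup.quotientKerEquivOfSurjective f' f'surj).toEquiv
  -- lower bound on kernel of f'
  have hlow : 8 ≤ Nat.card f'.ker := by
    have hinj : Function.Injective
        (fun A : {B : Matrix (Fin 2) (Fin 2) (ZMod 2) // B.trace = 0} =>
          (⟨⟨kel A.1, kel_trace_mem H hH A.1 A.2⟩, by
            simp only [MonoidHom.mem_ker, hf']
            exact kel_ker A.1⟩ : f'.ker)) := by
      intro A B hAB
      have : kel A.1 = kel B.1 := congrArg (fun x => (x.1.1 : GL (Fin 2) (ZMod (2^3)))) hAB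
      exact Subtype.ext (kel_inj this)
    have := Nat.card_le_card_of_injective _ hinj
    have hS : Nat.card {B : Matrix (Fin 2) (Fin 2) (ZMod 2) // B.trace = 0} = 8 := by
      rw [Nat.card_eq_fintype_card]; decide
    omega
  -- upper bound on kernel of f
  have hup : Nat.card f.ker ≤ 16 := by
    have key : ∀ x y : ZMod (2^3), c84 x = c84 y →
        ((x.val / 4 : ℕ) : ZMod 2) = ((y.val / 4 : ℕ) : ZMod 2) → x = y := by decide
    have hinj : Function.Injective
        (fun u : f.ker => (u.1.val).map (fun x : ZMod (2^3) => ((x.val / 4 : ℕ) : ZMod 2))) := by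
      intro u v huv
      have hu : (u.1.val).map c84 = 1 := congrArg Units.val u.2
      have hv : (v.1.val).map c84 = 1 := congrArg Units.val v.2
      apply Subtype.ext; apply Units.ext
      ext i j
      refine key _ _ ?_ ?_
      · have h1 : c84 (u.1.val i j) = (1 : Matrix (Fin 2) (Fin 2) (ZMod (2^2))) i j := by
          rw [← Matrix.map_apply (f := (c84 : ZMod (2^3) → ZMod (2^2))), hu]
        have h2 : c84 (v.1.val i j) = (1 : Matrix (Fin 2) (Fin 2) (ZMod (2^2))) i j := by
          rw [← Matrix.map_apply (f := (c84 : ZMod (2^3) → ZMod (2^2))), hv]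
        rw [h1, h2]
      · have := congrFun (congrFun huv i) j
        simpa [Matrix.map_apply] using this
    have := Nat.card_le_card_of_injective _ hinj
    have hM : Nat.card (Matrix (Fin 2) (Fin 2) (ZMod 2)) = 16 := by
      rw [Nat.card_eq_fintype_card]; decide
    omega
  -- put together
  have hmain := Subgroup.index_mul_card H
  have hpos : 0 < Nat.card H := Nat.card_pos
  rw [hcard2] at hmain hpos
  rw [hcard1] at hmain
  set c2 := Nat.card (GL (Fin 2) (ZMod (2^2)))
  have : H.index * (c2 * Nat.card f'.ker) ≤ 2 * (c2 * Nat.card f'.ker) := by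
    calc H.index * (c2 * Nat.card f'.ker) = c2 * Nat.card f.ker := hmain
    _ ≤ c2 * 16 := Nat.mul_le_mul_left c2 hup
    _ = 2 * (c2 * 8) := by ring
    _ ≤ 2 * (c2 * Nat.card f'.ker) := by
        exact Nat.mul_le_mul_left 2 (Nat.mul_le_mul_left c2 hlow)
  exact Nat.le_of_mul_le_mul_right this hpos

end

end St6

namespace St6

variable {m : ℕ}

abbrev ccm (m : ℕ) : ZMod (2^(m+4)) →+* ZMod (2^(m+3)) :=
  ZMod.castHom (pow_dvd_pow 2 (Nat.le_succ (m+3))) _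

lemma pow_zero_A (k : ℕ) (hk : m + 4 ≤ k) : (2 : ZMod (2^(m+4)))^k = 0 := by
  have h1 : ((2^(m+4) : ℕ) : ZMod (2^(m+4))) = 0 := ZMod.natCast_self _
  have : (2 : ZMod (2^(m+4)))^k = (2 : ZMod (2^(m+4)))^(m+4) * 2^(k - (m+4)) := by
    rw [← pow_add]; congr 1; omega
  rw [this]
  push_cast at h1
  rw [h1, zero_mul]

lemma pow_zero_B (k : ℕ) (hk : m + 3 ≤ k) : (2 : ZMod (2^(m+3)))^k = 0 := by
  have h1 : ((2^(m+3) : ℕ) : ZMod (2^(m+3))) = 0 := ZMod.natCast_self _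
  have : (2 : ZMod (2^(m+3)))^k = (2 : ZMod (2^(m+3)))^(m+3) * 2^(k - (m+3)) := by
    rw [← pow_add]; congr 1; omega
  rw [this]
  push_cast at h1
  rw [h1, zero_mul]

lemma entry_ker (x : ZMod (2^(m+4))) (h : ccm m x = 0) :
    x = 0 ∨ x = 2^(m+3) := by
  haveI : NeZero (2^(m+4)) := ⟨pow_ne_zero _ two_ne_zero⟩
  haveI : NeZero (2^(m+3)) := ⟨pow_ne_zero _ two_ne_zero⟩
  have hx : ((x.val : ℕ) : ZMod (2^(m+3))) = 0 := by
    rwa [ZMod.castHom_apply, ZMod.cast_eq_val] at h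
  have hdvd : 2^(m+3) ∣ x.val := by
    rwa [ZMod.natCast_eq_zero_iff] at hx
  have hlt : x.val < 2^(m+4) := ZMod.val_lt x
  have hxv : x.val = 0 ∨ x.val = 2^(m+3) := by
    obtain ⟨k, hk⟩ := hdvd
    have h2 : 2^(m+3) * k < 2^(m+3) * 2 := by
      calc 2^(m+3)*k = x.val := hk.symm
      _ < 2^(m+4) := hlt
      _ = 2^(m+3)*2 := by rw [pow_succ]
    have hk2 : k < 2 := Nat.lt_of_mul_lt_mul_left h2
    interval_cases k <;> omega
  have hcast : ((x.val : ℕ) : ZMod (2^(m+4))) = x := ZMod.natCast_zmod_val x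
  rcases hxv with h0 | h1
  · left; rw [← hcast, h0, Nat.cast_zero]
  · right; rw [← hcast, h1]; push_cast; ring

/-- half-kernel entries square analysis, zero case -/
lemma entry_C0 (y : ZMod (2^(m+4))) (h : ccm m y = 0) :
    2 * y = 0 ∧ ∃ t, y = 2^(m+2) * t := by
  rcases entry_ker y h with h0 | h1
  · exact ⟨by rw [h0, mul_zero], 0, by rw [h0, mul_zero]⟩
  · constructor
    · rw [h1, ← pow_succ']
      exact pow_zero_A _ (by omega)
    · exact ⟨2, by rw [h1, ← pow_succ]⟩

/-- half-kernel entries square analysis, nonzero case -/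
lemma entry_C1 (y : ZMod (2^(m+4))) (h : ccm m y = (2:ZMod (2^(m+3)))^(m+2)) :
    2 * y = 2^(m+3) ∧ ∃ t, y = 2^(m+2) * t := by
  haveI : NeZero (2^(m+4)) := ⟨pow_ne_zero _ two_ne_zero⟩
  haveI : NeZero (2^(m+3)) := ⟨pow_ne_zero _ two_ne_zero⟩
  have hx : ((y.val : ℕ) : ZMod (2^(m+3))) = ((2^(m+2) : ℕ) : ZMod (2^(m+3))) := by
    rw [ZMod.castHom_apply, ZMod.cast_eq_val] at h
    rw [h]; push_cast; ring
  have hmod : y.val % 2^(m+3) = 2^(m+2) % 2^(m+3) :=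
    (ZMod.natCast_eq_natCast_iff' _ _ _).mp hx
  have hsmall : 2^(m+2) % 2^(m+3) = 2^(m+2) :=
    Nat.mod_eq_of_lt (Nat.pow_lt_pow_right (by norm_num) (by omega))
  set q := y.val / 2^(m+3) with hq
  have hyval : y.val = 2^(m+3) * q + 2^(m+2) := by
    have h5 := Nat.div_add_mod y.val (2^(m+3))
    rw [hq]; omega
  have hcast : ((y.val : ℕ) : ZMod (2^(m+4))) = y := ZMod.natCast_zmod_val y
  have hyA : y = 2^(m+3) * (q : ZMod (2^(m+4))) + 2^(m+2) := by
    rw [← hcast, hyval]; push_cast; ring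
  constructor
  · rw [hyA]
    have : (2:ZMod (2^(m+4))) * (2^(m+3) * (q : ZMod (2^(m+4))) + 2^(m+2))
        = 2^(m+4) * (q : ZMod (2^(m+4))) + 2^(m+3) := by ring
    rw [this, pow_zero_A (m+4) le_rfl, zero_mul, zero_add]
  · exact ⟨2 * (q : ZMod (2^(m+4))) + 1, by rw [hyA]; ring⟩

end St6

namespace St6B
open St6

lemma cc_one_entry {m : ℕ} (i j : Fin 2) :
    ccm m ((1 : Matrix (Fin 2) (Fin 2) (ZMod (2^(m+4)))) i j)
      = (1 : Matrix (Fin 2) (Fin 2) (ZMod (2^(m+3)))) i j := by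
  by_cases h : i = j
  · subst h; rw [Matrix.one_apply_eq, Matrix.one_apply_eq]; exact map_one _
  · simp [Matrix.one_apply_ne h]

lemma powA_ne_zero {m : ℕ} : (2:ZMod (2^(m+4)))^(m+3) ≠ 0 := by
  haveI : NeZero (2^(m+4)) := ⟨pow_ne_zero _ two_ne_zero⟩
  intro hcon
  have h2 : ((2^(m+3) : ℕ) : ZMod (2^(m+4))) = 0 := by push_cast; exact hcon
  rw [ZMod.natCast_eq_zero_iff] at h2
  have h3 := Nat.le_of_dvd (by positivity) h2
  have h4 : (2:ℕ)^(m+3) < 2^(m+4) := Nat.pow_lt_pow_right (by norm_num) (Nat.lt_succ_self (m+3))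
  omega

lemma prodB {m : ℕ} (a b : ZMod (2^(m+3))) (ha : a = 0 ∨ a = 2^(m+2))
    (hb : b = 0 ∨ b = 2^(m+2)) : a * b = 0 := by
  rcases ha with h|h <;> rcases hb with h'|h' <;> rw [h, h']
  · simp
  · simp
  · simp
  · rw [← pow_add]; exact pow_zero_B _ (by omega)

lemma prodA {m : ℕ} (a b : ZMod (2^(m+4))) (ha : ∃ t, a = 2^(m+2) * t)
    (hb : ∃ t, b = 2^(m+2) * t) : a * b = 0 := by
  obtain ⟨t, rfl⟩ := ha
  obtain ⟨s, rfl⟩ := hb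
  have : (2:ZMod (2^(m+4)))^(m+2) * t * (2^(m+2) * s) = 2^(m+2)*2^(m+2)*(t*s) := by ring
  rw [this, ← pow_add, pow_zero_A _ (by omega), zero_mul]

lemma step {m : ℕ} (H : Subgroup (GL (Fin 2) (ZMod (2^(m+4)))))
    (hH : Subgroup.map (glMap (ccm m)) H = ⊤) : H = ⊤ := by
  have hker : (glMap (ccm m)).ker ≤ H := by
    intro u hu
    have huval : (u.val).map (ccm m) = 1 := congrArg Units.val (MonoidHom.mem_ker.mp hu)
    have he : ∀ i j, ccm m (u.val i j)
        = (1 : Matrix (Fin 2) (Fin 2) (ZMod (2^(m+3)))) i j := fun i j => by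
      rw [← Matrix.map_apply (f := (ccm m : ZMod (2^(m+4)) → ZMod (2^(m+3)))), huval]
    set X : Matrix (Fin 2) (Fin 2) (ZMod (2^(m+4))) := u.val - 1 with hX
    have hXk : ∀ i j, X i j = 0 ∨ X i j = 2^(m+3) := fun i j => by
      apply entry_ker
      rw [hX, Matrix.sub_apply, map_sub, he i j, cc_one_entry i j, sub_self]
    set Q : Matrix (Fin 2) (Fin 2) (ZMod (2^(m+3))) :=
      Matrix.of (fun i j => if X i j = 0 then 0 else 2^(m+2)) with hQdef
    have hQ : ∀ i j, Q i j = 0 ∨ Q i j = 2^(m+2) := fun i j => by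
      by_cases h : X i j = 0 <;> simp [hQdef, h]
    have hW : (1 + Q) * (1 + Q) = 1 := by
      have hQQ : Q * Q = 0 := by
        ext i j
        rw [Matrix.mul_apply, Fin.sum_univ_two,
          prodB _ _ (hQ i 0) (hQ 0 j), prodB _ _ (hQ i 1) (hQ 1 j), add_zero, Matrix.zero_apply]
      have hQ2 : Q + Q = 0 := by
        ext i j
        rw [Matrix.add_apply, Matrix.zero_apply]
        rcases hQ i j with h|h
        · rw [h, add_zero]
        · rw [h, ← two_mul, ← pow_succ']
          exact pow_zero_B _ le_rfl
      calc (1+Q)*(1+Q) = 1 + (Q + Q) + Q*Q := by noncomm_ring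
      _ = 1 := by rw [hQ2, hQQ, add_zero, add_zero]
    have hw : (⟨1 + Q, 1 + Q, hW, hW⟩ : GL (Fin 2) (ZMod (2^(m+3))))
        ∈ Subgroup.map (glMap (ccm m)) H := by rw [hH]; trivial
    obtain ⟨h, hhH, hfh⟩ := hw
    set Y : Matrix (Fin 2) (Fin 2) (ZMod (2^(m+4))) := h.val - 1 with hY
    have hYe : ∀ i j, ccm m (Y i j) = Q i j := fun i j => by
      have hval : (h.val).map (ccm m) = 1 + Q := congrArg Units.val hfh
      have h1 : ccm m (h.val i j) = (1 + Q) i j := by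
        rw [← Matrix.map_apply (f := (ccm m : ZMod (2^(m+4)) → ZMod (2^(m+3)))), hval]
      rw [hY, Matrix.sub_apply, map_sub, h1, Matrix.add_apply, cc_one_entry i j]
      ring
    have hprop : ∀ i j, 2 * Y i j = X i j ∧ ∃ t, Y i j = 2^(m+2) * t := fun i j => by
      rcases hXk i j with h0 | h1
      · have hq0 : Q i j = 0 := by simp [hQdef, h0]
        have := entry_C0 (Y i j) (by rw [hYe i j, hq0])
        rw [h0]; exact this
      · have hne : X i j ≠ 0 := by
          rw [h1]; exact powA_ne_zero
        have hq1 : Q i j = 2^(m+2) := by simp [hQdef, hne]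
        have := entry_C1 (Y i j) (by rw [hYe i j, hq1])
        rw [h1]; exact this
    have hsq : h * h = u := by
      apply Units.ext
      show h.val * h.val = u.val
      have hval : h.val = 1 + Y := by rw [hY]; noncomm_ring
      have hYY : Y * Y = 0 := by
        ext i j
        rw [Matrix.mul_apply, Fin.sum_univ_two,
          prodA _ _ (hprop i 0).2 (hprop 0 j).2, prodA _ _ (hprop i 1).2 (hprop 1 j).2,
          add_zero, Matrix.zero_apply]
      have hY2 : Y + Y = X := by
        ext i j
        rw [Matrix.add_apply, ← two_mul]
        exact (hprop i j).1
      calc h.val * h.val = (1 + Y) * (1 + Y) := by rw [← hval]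
      _ = 1 + (Y + Y) + Y*Y := by noncomm_ring
      _ = u.val := by rw [hY2, hYY, add_zero, hX]; noncomm_ring
    exact hsq ▸ mul_mem hhH hhH
  have hcm := Subgroup.comap_map_eq (glMap (ccm m)) H
  rw [hH, Subgroup.comap_top, sup_of_le_left hker] at hcm
  exact hcm.symm

end St6B

namespace St6T

lemma entry_norm_le {k : ℕ} (u v : GL (Fin 2) ℤ_[2])
    (h : glMap (PadicInt.toZModPow (p := 2) k) u = glMap (PadicInt.toZModPow (p := 2) k) v)
    (i j : Fin 2) : ‖u.val i j - v.val i j‖ ≤ (2:ℝ)^(-(k:ℤ)) := by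
  have hval : (u.val).map (PadicInt.toZModPow (p := 2) k)
      = (v.val).map (PadicInt.toZModPow (p := 2) k) := congrArg Units.val h
  have he : PadicInt.toZModPow (p := 2) k (u.val i j)
      = PadicInt.toZModPow (p := 2) k (v.val i j) := by
    have := congrFun (congrFun hval i) j
    simpa [Matrix.map_apply] using this
  have hker : u.val i j - v.val i j ∈ RingHom.ker (PadicInt.toZModPow (p := 2) k) := by
    rw [RingHom.mem_ker, map_sub, he, sub_self]
  rw [PadicInt.ker_toZModPow] at hker
  have := (PadicInt.norm_le_pow_iff_mem_span_pow (u.val i j - v.val i j) k).mpr hker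
  simpa using this

lemma dense_closed_eq_top (G : Subgroup (GL (Fin 2) ℤ_[2]))
    (hGclosed : IsClosed (G : Set (GL (Fin 2) ℤ_[2])))
    (htop : ∀ m : ℕ, Subgroup.map (glMap (PadicInt.toZModPow (p := 2) (m+3))) G = ⊤) :
    G = ⊤ := by
  ext g
  simp only [Subgroup.mem_top, iff_true]
  have hx : ∀ m : ℕ, ∃ x, x ∈ G ∧ glMap (PadicInt.toZModPow (p := 2) (m+3)) x
      = glMap (PadicInt.toZModPow (p := 2) (m+3)) g := by
    intro m
    have : glMap (PadicInt.toZModPow (p := 2) (m+3)) g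
        ∈ Subgroup.map (glMap (PadicInt.toZModPow (p := 2) (m+3))) G := by
      rw [htop m]; trivial
    obtain ⟨y, hyG, hye⟩ := this
    exact ⟨y, hyG, hye⟩
  choose x hxG hxe using hx
  -- auxiliary bound sequence
  have hb : Filter.Tendsto (fun m : ℕ => (2:ℝ)^(-((m:ℤ)+3))) Filter.atTop (nhds 0) := by
    have h1 : Filter.Tendsto (fun m : ℕ => ((1:ℝ)/2)^(m+3)) Filter.atTop (nhds 0) := by
      have := (tendsto_pow_atTop_nhds_zero_of_lt_one
        (by norm_num : (0:ℝ) ≤ 1/2) (by norm_num : (1:ℝ)/2 < 1))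
      exact this.comp (Filter.tendsto_add_atTop_nat 3)
    convert h1 using 2 with m
    rw [div_pow, one_pow, ← zpow_natCast (2:ℝ) (m+3), one_div, ← zpow_neg]
    push_cast
    ring_nf
  -- entrywise convergence helper
  have hconv : ∀ (w : ℕ → GL (Fin 2) ℤ_[2]) (l : GL (Fin 2) ℤ_[2]),
      (∀ m i j, ‖(w m).val i j - l.val i j‖ ≤ (2:ℝ)^(-((m:ℤ)+3))) →
      Filter.Tendsto (fun m => (w m).val) Filter.atTop (nhds l.val) := by
    intro w l hw
    apply tendsto_pi_nhds.mpr
    intro i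
    apply tendsto_pi_nhds.mpr
    intro j
    apply tendsto_iff_dist_tendsto_zero.mpr
    apply squeeze_zero (fun m => dist_nonneg) (fun m => ?_) hb
    rw [dist_eq_norm]
    exact hw m i j
  have htt : Filter.Tendsto x Filter.atTop (nhds g) := by
    rw [Units.isInducing_embedProduct.tendsto_nhds_iff]
    have h1 : Filter.Tendsto (fun m => (x m).val) Filter.atTop (nhds g.val) := by
      apply hconv
      intro m i j
      have h2 := entry_norm_le (x m) g (hxe m) i j
      have hcast : (-((m+3:ℕ):ℤ)) = (-((m:ℤ)+3)) := by push_cast; ring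
      rwa [hcast] at h2
    have h2 : Filter.Tendsto (fun m => MulOpposite.op ((x m)⁻¹).val) Filter.atTop
        (nhds (MulOpposite.op (g⁻¹).val)) := by
      apply (MulOpposite.continuous_op.tendsto _).comp
      apply hconv
      intro m i j
      have h2 := entry_norm_le (k := m+3) ((x m)⁻¹) g⁻¹ (by rw [map_inv, map_inv, hxe m]) i j
      have hcast : (-((m+3:ℕ):ℤ)) = (-((m:ℤ)+3)) := by push_cast; ring
      rwa [hcast] at h2
    exact Filter.Tendsto.prodMk_nhds h1 h2
  have hcl : g ∈ closure (G : Set (GL (Fin 2) ℤ_[2])) :=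
    mem_closure_of_tendsto htt (Filter.Eventually.of_forall hxG)
  rwa [hGclosed.closure_eq] at hcl

end St6T

/-- Let `G ⊆ GL₂(ℤ₂)` be a closed subgroup.  If `G(4) = GL₂(ℤ/4ℤ)`, then either
`G = GL₂(ℤ₂)` or `[GL₂(ℤ/8ℤ) : G(8)] = 2`. -/
theorem statement6 (G : Subgroup (GL (Fin 2) ℤ_[2]))
    (hGclosed : IsClosed (G : Set (GL (Fin 2) ℤ_[2])))
    (h4 : Subgroup.map (glMap (PadicInt.toZModPow (p := 2) 2)) G = ⊤) :
    G = ⊤ ∨ (Subgroup.map (glMap (PadicInt.toZModPow (p := 2) 3)) G).index = 2 := by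
  set H3 := Subgroup.map (glMap (PadicInt.toZModPow (p := 2) 3)) G with hH3
  have hmap3 : Subgroup.map (glMap St6.c84) H3 = ⊤ := by
    rw [hH3, Subgroup.map_map]
    have hcomp : (glMap St6.c84).comp (glMap (PadicInt.toZModPow (p := 2) 3))
        = glMap (PadicInt.toZModPow (p := 2) 2) := by
      show glMap ((St6.c84).comp (PadicInt.toZModPow (p := 2) 3)) = _
      rw [PadicInt.zmod_cast_comp_toZModPow 2 3 (by norm_num : 2 ≤ 3)]
    rw [hcomp, h4]
  rcases eq_or_ne (H3.index) 2 with h2 | hne2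
  · right; exact h2
  · left
    have hle := St6.index_le_two H3 hmap3
    have hne0 : H3.index ≠ 0 := Subgroup.index_ne_zero_of_finite
    have h1 : H3.index = 1 := by omega
    have htop3 : H3 = ⊤ := Subgroup.index_eq_one.mp h1
    have htopm : ∀ m : ℕ, Subgroup.map (glMap (PadicInt.toZModPow (p := 2) (m+3))) G = ⊤ := by
      intro m
      induction m with
      | zero => exact htop3
      | succ k ih =>
        apply St6B.step
        rw [Subgroup.map_map]
        have hcomp : (glMap (St6.ccm k)).comp (glMap (PadicInt.toZModPow (p := 2) (k+1+3)))
            = glMap (PadicInt.toZModPow (p := 2) (k+3)) := by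
          show glMap ((St6.ccm k).comp (PadicInt.toZModPow (p := 2) (k+1+3))) = _
          rw [PadicInt.zmod_cast_comp_toZModPow (k+3) (k+4) (Nat.le_succ (k+3))]
        rw [hcomp, ih]
    exact St6T.dense_closed_eq_top G hGclosed htopm
end

section
/- Let G₁ and G₂ be finite groups and let π : G₁ → G₂ be a surjective group homomorphism. Let H₁ ⊆ G₁ and H₂ ⊆ G₂ be subgroups satisfying π(H₁) = H₂, and let N₁ ⊴ G₁ and N₂ ⊴ G₂ be normal subgroups satisfying π(N₁) = N₂. Assume that gcd(#N₁, #ker π) = 1 and that every element of N₁ commutes with every element of ker π, i.e. [N₁, ker π] = {1}. Then N₁ ⊆ H₁ if and only if N₂ ⊆ H₂. -/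
/-!
Write `k = #ker π`. Since `#N₁` is coprime to `k`, every `n ∈ N₁` is a `k`-th power `m ^ k` with
`m ∈ N₁`. If `π m ∈ π(H₁)`, then `m b ∈ H₁` for some `b ∈ ker π`; as `b` commutes with `m` and
`b ^ k = 1`, we get `n = m ^ k = (m b) ^ k ∈ H₁`.
-/

namespace Subgroup

variable {G G' : Type*} [Group G] [Group G']

theorem pow_card_ker_mem_of_map_mem (π : G →* G') {H : Subgroup G} {m : G}
    (hm : ∀ b ∈ π.ker, Commute m b) (hmH : π m ∈ H.map π) :
    m ^ Nat.card π.ker ∈ H := by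
  obtain ⟨h, hH, hπh⟩ := hmH
  have hb : m⁻¹ * h ∈ π.ker := by
    rw [MonoidHom.mem_ker, map_mul, map_inv, hπh, inv_mul_cancel]
  have hbk : (m⁻¹ * h) ^ Nat.card π.ker = 1 :=
    congrArg Subtype.val (pow_card_eq_one' : (⟨_, hb⟩ : π.ker) ^ Nat.card π.ker = 1)
  have hh : h ^ Nat.card π.ker = m ^ Nat.card π.ker := by
    rw [← mul_inv_cancel_left m h, (hm _ hb).mul_pow, hbk, mul_one]
  exact hh ▸ pow_mem hH _

theorem le_of_map_le_map_of_coprime (π : G →* G') {H N : Subgroup G}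
    (hcop : (Nat.card N).Coprime (Nat.card π.ker))
    (hcomm : ∀ a ∈ N, ∀ b ∈ π.ker, a * b = b * a) (hle : N.map π ≤ H.map π) : N ≤ H := by
  intro n hn
  obtain ⟨m, hm⟩ := hcop.pow_left_bijective.surjective ⟨n, hn⟩
  have hmn : (m : G) ^ Nat.card π.ker = n := congrArg Subtype.val hm
  exact hmn ▸ pow_card_ker_mem_of_map_mem π (hcomm m m.2) (hle (mem_map_of_mem π m.2))

end Subgroup

theorem statement7_general {G₁ G₂ : Type*} [Group G₁] [Group G₂]
    (π : G₁ →* G₂)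
    (H₁ : Subgroup G₁) (H₂ : Subgroup G₂) (hH : Subgroup.map π H₁ = H₂)
    (N₁ : Subgroup G₁) (N₂ : Subgroup G₂)
    (hN : Subgroup.map π N₁ = N₂)
    (hcop : Nat.Coprime (Nat.card N₁) (Nat.card π.ker))
    (hcomm : ∀ a ∈ N₁, ∀ b ∈ π.ker, a * b = b * a) :
    N₁ ≤ H₁ ↔ N₂ ≤ H₂ := by
  subst hH hN
  exact ⟨Subgroup.map_mono, Subgroup.le_of_map_le_map_of_coprime π hcop hcomm⟩

/-- Let `G₁, G₂` be finite groups, `π : G₁ → G₂` a surjective homomorphism,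
`H₁ ⊆ G₁`, `H₂ ⊆ G₂` subgroups with `π(H₁) = H₂`, and `N₁ ⊴ G₁`, `N₂ ⊴ G₂`
normal subgroups with `π(N₁) = N₂`.  If `gcd(#N₁, #ker π) = 1` and
`[N₁, ker π] = {1}`, then `N₁ ⊆ H₁ ↔ N₂ ⊆ H₂`. -/
theorem statement7 {G₁ G₂ : Type*} [Group G₁] [Group G₂] [Finite G₁] [Finite G₂]
    (π : G₁ →* G₂) (hπ : Function.Surjective π)
    (H₁ : Subgroup G₁) (H₂ : Subgroup G₂) (hH : Subgroup.map π H₁ = H₂)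
    (N₁ : Subgroup G₁) (N₂ : Subgroup G₂) [N₁.Normal] [N₂.Normal]
    (hN : Subgroup.map π N₁ = N₂)
    (hcop : Nat.Coprime (Nat.card N₁) (Nat.card π.ker))
    (hcomm : ∀ a ∈ N₁, ∀ b ∈ π.ker, a * b = b * a) :
    N₁ ≤ H₁ ↔ N₂ ≤ H₂ :=
  statement7_general π H₁ H₂ hH N₁ N₂ hN hcop hcomm
end

section
/- Let ℓ be a prime number and let H ⊆ GL₂(ℤ/ℓℤ) be any subgroup. If SL₂(ℤ/ℓℤ) is not contained in H, then ℓ ≤ [GL₂(ℤ/ℓℤ) : H]. -/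
/-!
If `[GL₂(𝔽_ℓ) : H] < ℓ`, then every `g` with `g ^ ℓ = 1` lies in `H`: the index of `⟨g⟩ ⊓ H` in
`⟨g⟩` divides `ℓ` and is at most `[GL₂(𝔽_ℓ) : H] < ℓ`, so it is `1`. Transvections satisfy
`t ^ ℓ = 1` and generate `SL₂(𝔽_ℓ)`.
-/

open scoped MatrixGroups

theorem Subgroup.mem_of_pow_eq_one_of_index_lt {G : Type*} [Group G] {H : Subgroup G}
    [H.FiniteIndex] {p : ℕ} (hp : p.Prime) (hH : H.index < p) {g : G} (hg : g ^ p = 1) :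
    g ∈ H := by
  have hdvd : H.relIndex (zpowers g) ∣ p :=
    (relIndex_dvd_card _ _).trans (Nat.card_zpowers g ▸ orderOf_dvd_of_pow_eq_one hg)
  have hle : H.relIndex (zpowers g) ≤ H.index := by
    rw [← relIndex_top_right]
    exact relIndex_le_of_le_right le_top (relIndex_top_right H ▸ FiniteIndex.index_ne_zero)
  rcases hp.eq_one_or_self_of_dvd _ hdvd with h_one | h_eq_p
  · exact relIndex_eq_one.mp h_one (mem_zpowers g)
  · omega

namespace Matrix.SpecialLinearGroup

variable {ι F : Type*} [DecidableEq ι] [Fintype ι] [CommRing F]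

theorem transvection_pow {i j : ι} (hij : i ≠ j) (b : F) (n : ℕ) :
    transvection hij b ^ n = transvection hij (n * b) := by
  induction n with
  | zero => simp
  | succ n ih => rw [pow_succ, ih, ← transvection_add]; push_cast; ring_nf

theorem transvection_pow_eq_one_of_charP (p : ℕ) [CharP F p] {i j : ι} (hij : i ≠ j) (b : F) :
    transvection hij b ^ p = 1 := by
  simp [transvection_pow]

end Matrix.SpecialLinearGroup

theorem SL2subgroup_le_of_index_lt {F : Type*} [Field F] {p : ℕ} [CharP F p] (hp : p.Prime)
    {H : Subgroup (GL (Fin 2) F)} [H.FiniteIndex] (hH : H.index < p) : SL2subgroup F ≤ H := by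
  rintro _ ⟨A, rfl⟩
  induction A using Matrix.SL2.transvection_induction with
  | htransvec i j hij c =>
    refine H.mem_of_pow_eq_one_of_index_lt hp hH ?_
    rw [← map_pow, Matrix.SpecialLinearGroup.transvection_pow_eq_one_of_charP p, map_one]
  | hmul A B hA hB => simpa using H.mul_mem hA hB

/-- Let `ℓ` be a prime and `H ⊆ GL₂(ℤ/ℓℤ)` any subgroup.  If `SL₂(ℤ/ℓℤ)` is not
contained in `H`, then `ℓ ≤ [GL₂(ℤ/ℓℤ) : H]`. -/
theorem statement9 (ℓ : ℕ) (hℓ : ℓ.Prime) (H : Subgroup (GL (Fin 2) (ZMod ℓ)))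
    (h : ¬ SL2subgroup (ZMod ℓ) ≤ H) : ℓ ≤ H.index := by
  have : Fact ℓ.Prime := ⟨hℓ⟩
  by_contra! hlt
  exact h (SL2subgroup_le_of_index_lt hℓ hlt)
end

section
/- Let N ⊴ GL₂(ℤ₃) be a closed normal subgroup such that the closed subgroup generated by SL₂(ℤ₃) together with N is all of GL₂(ℤ₃). Then N = GL₂(ℤ₃). -/
set_option maxRecDepth 100000
set_option linter.unnecessarySeqFocus false
set_option linter.unusedTactic false
set_option linter.unusedVariables false



open scoped MatrixGroups
open scoped commutatorElement

open Matrix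


abbrev M3 := Matrix (Fin 2) (Fin 2) (ZMod 3)
abbrev G3 := GL (Fin 2) (ZMod 3)

def myInv (A : M3) : M3 := !![A 1 1, -(A 0 1); -(A 1 0), A 0 0]

def Q8 : Finset M3 :=
  { !![1,0;0,1], !![2,0;0,2], !![0,2;1,0], !![0,1;2,0],
    !![1,1;1,2], !![2,2;2,1], !![2,1;1,1], !![1,2;2,2] }

def Z2 : Finset M3 := { !![1,0;0,1], !![2,0;0,2] }

theorem q8_one : (1 : M3) ∈ Q8 := by decide
theorem q8_mul : ∀ a ∈ Q8, ∀ b ∈ Q8, a * b ∈ Q8 := by decide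
theorem q8_det : ∀ a ∈ Q8, a.det = 1 := by decide
theorem q8_myInv : ∀ a ∈ Q8, myInv a ∈ Q8 := by decide
theorem z2_one : (1 : M3) ∈ Z2 := by decide
theorem z2_mul : ∀ a ∈ Z2, ∀ b ∈ Z2, a * b ∈ Z2 := by decide
theorem z2_det : ∀ a ∈ Z2, a.det = 1 := by decide
theorem z2_myInv : ∀ a ∈ Z2, myInv a ∈ Z2 := by decide
theorem mul_myInv : ∀ a : M3, a.det = 1 → a * myInv a = 1 := by decide
theorem F2 : ∀ a ∈ Q8, ∀ b ∈ Q8, a * b * myInv a * myInv b ∈ Z2 := by decide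
theorem F3 : ∀ a ∈ Z2, ∀ b ∈ Z2, a * b * myInv a * myInv b = 1 := by decide
theorem F1 : ∀ a b : M3, a.det = 1 → b.det = 1 → a * b * myInv a * myInv b ∈ Q8 := by decide

lemma inv_val (g : G3) (hg : (g : M3).det = 1) : ((g⁻¹ : G3) : M3) = myInv (g : M3) :=
  Units.inv_eq_of_mul_eq_one_right (mul_myInv _ hg)

lemma comm_val (g h : G3) (hg : (g : M3).det = 1) (hh : (h : M3).det = 1) :
    ((⁅g, h⁆ : G3) : M3) = (g : M3) * (h : M3) * myInv (g : M3) * myInv (h : M3) := by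
  rw [commutatorElement_def, Units.val_mul, Units.val_mul, Units.val_mul,
    inv_val g hg, inv_val h hh]

def Ssub : Subgroup G3 := (Units.map (detMonoidHom : M3 →* ZMod 3)).ker

lemma mem_Ssub_det {g : G3} (hg : g ∈ Ssub) : (g : M3).det = 1 := by
  have := congrArg Units.val hg
  simpa [detMonoidHom] using this

def Qsub : Subgroup G3 where
  carrier := {u | (u : M3) ∈ Q8}
  one_mem' := by simpa using q8_one
  mul_mem' := by
    intro a b ha hb
    simpa [Units.val_mul] using q8_mul _ ha _ hb
  inv_mem' := by
    intro a ha
    simp only [Set.mem_setOf_eq] at ha ⊢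
    rw [inv_val a (q8_det _ ha)]
    exact q8_myInv _ ha

def Zsub : Subgroup G3 where
  carrier := {u | (u : M3) ∈ Z2}
  one_mem' := by simpa using z2_one
  mul_mem' := by
    intro a b ha hb
    simpa [Units.val_mul] using z2_mul _ ha _ hb
  inv_mem' := by
    intro a ha
    simp only [Set.mem_setOf_eq] at ha ⊢
    rw [inv_val a (z2_det _ ha)]
    exact z2_myInv _ ha

instance solvG3 : Group.IsSolvable G3 := by
  refine ⟨⟨4, le_bot_iff.mp ?_⟩⟩
  have h1 : derivedSeries G3 1 ≤ Ssub := by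
    rw [derivedSeries_succ, derivedSeries_zero]
    rw [Subgroup.commutator_le]
    intro g _ h _
    have : (Units.map (detMonoidHom : M3 →* ZMod 3)) ⁅g, h⁆ = 1 := by
      rw [map_commutatorElement]
      exact commutatorElement_eq_one_iff_mul_comm.mpr (mul_comm _ _)
    exact this
  have h2 : derivedSeries G3 2 ≤ Qsub := by
    rw [derivedSeries_succ]
    refine le_trans (Subgroup.commutator_mono h1 h1) ?_
    rw [Subgroup.commutator_le]
    intro g hg h hh
    have : (⁅g, h⁆ : G3).val ∈ Q8 := by
      rw [comm_val g h (mem_Ssub_det hg) (mem_Ssub_det hh)]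
      exact F1 _ _ (mem_Ssub_det hg) (mem_Ssub_det hh)
    exact this
  have h3 : derivedSeries G3 3 ≤ Zsub := by
    rw [derivedSeries_succ]
    refine le_trans (Subgroup.commutator_mono h2 h2) ?_
    rw [Subgroup.commutator_le]
    intro g hg h hh
    have : (⁅g, h⁆ : G3).val ∈ Z2 := by
      rw [comm_val g h (q8_det _ hg) (q8_det _ hh)]
      exact F2 _ hg _ hh
    exact this
  have h4 : derivedSeries G3 4 ≤ ⊥ := by
    rw [derivedSeries_succ]
    refine le_trans (Subgroup.commutator_mono h3 h3) ?_
    rw [Subgroup.commutator_le]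
    intro g hg h hh
    rw [Subgroup.mem_bot]
    apply Units.ext
    rw [comm_val g h (z2_det _ hg) (z2_det _ hh), Units.val_one]
    exact F3 _ hg _ hh
  exact h4


noncomputable section

abbrev R3 := ℤ_[3]
abbrev GL2 := GL (Fin 2) R3
abbrev SL2 := Matrix.SpecialLinearGroup (Fin 2) R3

def Umat (s : R3) : SL2 := ⟨!![1, s; 0, 1], by simp [Matrix.det_fin_two_of]⟩
def Lmat (t : R3) : SL2 := ⟨!![1, 0; t, 1], by simp [Matrix.det_fin_two_of]⟩

def Egen : Subgroup SL2 := Subgroup.closure (Set.range Umat ∪ Set.range Lmat)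

lemma gen1 (B : SL2) (hc : IsUnit (B.val 1 0)) : B ∈ Egen := by
  obtain ⟨cu, hcu⟩ := hc
  set a := B.val 0 0 with ha
  set b := B.val 0 1 with hb
  set c := B.val 1 0 with hcdef
  set d := B.val 1 1 with hd
  set e : R3 := ↑cu⁻¹ with he
  have hec : e * c = 1 := by rw [he, ← hcu]; exact Units.inv_mul _
  have hce : c * e = 1 := by rw [he, ← hcu]; exact Units.mul_inv _
  have hdet : a * d - b * c = 1 := by
    have := B.2
    rwa [Matrix.det_fin_two] at this
  have key : Umat ((1 - a) * e) * B = Lmat c * Umat (b + ((1 - a) * e) * d) := by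
    apply Subtype.ext
    rw [Matrix.SpecialLinearGroup.coe_mul, Matrix.SpecialLinearGroup.coe_mul]
    have hB : B.val = !![a, b; c, d] := by
      rw [ha, hb, hcdef, hd]; exact (Matrix.eta_fin_two B.val)
    rw [hB]
    show (Umat _).val * _ = (Lmat c).val * (Umat _).val
    rw [Umat, Lmat, Umat]
    ext i j
    fin_cases i <;> fin_cases j <;>
      simp [Matrix.mul_apply, Fin.sum_univ_two]
    · linear_combination (1 - a) * hec
    · linear_combination (a - 1) * d * hce + hdet
  have h1 : Umat ((1-a)*e) ∈ Egen := Subgroup.subset_closure (Or.inl ⟨_, rfl⟩)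
  have h2 : Lmat c ∈ Egen := Subgroup.subset_closure (Or.inr ⟨_, rfl⟩)
  have h3 : Umat (b + ((1-a)*e)*d) ∈ Egen := Subgroup.subset_closure (Or.inl ⟨_, rfl⟩)
  have : B = (Umat ((1-a)*e))⁻¹ * (Lmat c * Umat (b + ((1-a)*e)*d)) := by
    rw [← key, inv_mul_cancel_left]
  rw [this]
  exact Subgroup.mul_mem _ (Subgroup.inv_mem _ h1) (Subgroup.mul_mem _ h2 h3)

end
noncomputable section
open Matrix

lemma unit_or (B : SL2) : IsUnit (B.val 1 0) ∨ IsUnit (B.val 0 0) := by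
  by_contra h
  push_neg at h
  obtain ⟨h1, h2⟩ := h
  have hdet : B.val 0 0 * B.val 1 1 - B.val 0 1 * B.val 1 0 = 1 := by
    have := B.2; rwa [Matrix.det_fin_two] at this
  have hm1 : B.val 1 0 ∈ IsLocalRing.maximalIdeal R3 := h1
  have hm2 : B.val 0 0 ∈ IsLocalRing.maximalIdeal R3 := h2
  have : (1 : R3) ∈ IsLocalRing.maximalIdeal R3 := by
    rw [← hdet]
    exact Ideal.sub_mem _ (Ideal.mul_mem_right _ _ hm2) (Ideal.mul_mem_left _ _ hm1)
  exact (IsLocalRing.maximalIdeal.isMaximal R3).ne_top (Ideal.eq_top_of_isUnit_mem _ this isUnit_one)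

lemma gen_all (B : SL2) : B ∈ Egen := by
  rcases unit_or B with hc | ha
  · exact gen1 B hc
  · obtain ⟨au, hau⟩ := ha
    set e : R3 := ↑au⁻¹ with he
    have hea : e * B.val 0 0 = 1 := by rw [he, ← hau]; exact Units.inv_mul _
    set t : R3 := (1 - B.val 1 0) * e with ht
    have hB' : (Lmat t * B).val 1 0 = 1 := by
      rw [Matrix.SpecialLinearGroup.coe_mul, Lmat]
      simp [Matrix.mul_apply, Fin.sum_univ_two]
      linear_combination (1 - B.val 1 0) * hea
    have hmem := gen1 (Lmat t * B) (by rw [hB']; exact isUnit_one)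
    have hL : Lmat t ∈ Egen := Subgroup.subset_closure (Or.inr ⟨_, rfl⟩)
    have : B = (Lmat t)⁻¹ * (Lmat t * B) := by rw [inv_mul_cancel_left]
    rw [this]
    exact Subgroup.mul_mem _ (Subgroup.inv_mem _ hL) hmem

def Dmat : GL2 :=
  ⟨!![1,0;0,-1], !![1,0;0,-1],
   by ext i j; fin_cases i <;> fin_cases j <;> simp [Matrix.mul_apply, Fin.sum_univ_two, Matrix.one_apply],
   by ext i j; fin_cases i <;> fin_cases j <;> simp [Matrix.mul_apply, Fin.sum_univ_two, Matrix.one_apply]⟩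

open Matrix.SpecialLinearGroup in
lemma commU (σ : R3) : ⁅Dmat, toGL (Umat σ)⁆ = toGL (Umat (-2*σ)) := by
  apply Units.ext
  rw [commutatorElement_def, Units.val_mul, Units.val_mul, Units.val_mul, ← map_inv toGL]
  show Dmat.val * (Umat σ).val * (Dmat⁻¹).val * ((Umat σ)⁻¹).val = (Umat (-2*σ)).val
  have h1 : (Dmat⁻¹).val = !![1,0;0,-1] := rfl
  have h2 : ((Umat σ)⁻¹).val = !![1,-σ;0,1] := by
    rw [Matrix.SpecialLinearGroup.coe_inv, Umat, Matrix.adjugate_fin_two]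
    norm_num
  rw [h1, h2]
  show !![1,0;0,-1] * (Umat σ).val * _ * _ = _
  rw [Umat, Umat]
  ext i j
  fin_cases i <;> fin_cases j <;> simp [Matrix.mul_apply, Fin.sum_univ_two] <;> ring

open Matrix.SpecialLinearGroup in
lemma commL (σ : R3) : ⁅Dmat, toGL (Lmat σ)⁆ = toGL (Lmat (-2*σ)) := by
  apply Units.ext
  rw [commutatorElement_def, Units.val_mul, Units.val_mul, Units.val_mul, ← map_inv toGL]
  show Dmat.val * (Lmat σ).val * (Dmat⁻¹).val * ((Lmat σ)⁻¹).val = (Lmat (-2*σ)).val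
  have h1 : (Dmat⁻¹).val = !![1,0;0,-1] := rfl
  have h2 : ((Lmat σ)⁻¹).val = !![1,0;-σ,1] := by
    rw [Matrix.SpecialLinearGroup.coe_inv, Lmat, Matrix.adjugate_fin_two]
    norm_num
  rw [h1, h2]
  show !![1,0;0,-1] * (Lmat σ).val * _ * _ = _
  rw [Lmat, Lmat]
  ext i j
  fin_cases i <;> fin_cases j <;> simp [Matrix.mul_apply, Fin.sum_univ_two] <;> ring

lemma isUnit_two : IsUnit (2 : R3) := by
  rw [PadicInt.isUnit_iff]
  refine le_antisymm (PadicInt.norm_le_one _) (not_lt.mp ?_)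
  intro h
  have h2 : ((2:ℤ) : R3) = (2 : R3) := by push_cast; ring
  rw [← h2] at h
  have := (PadicInt.norm_int_lt_one_iff_dvd 2).mp h
  norm_num at this

open Matrix.SpecialLinearGroup in
lemma SL_le_commutator : SL2subgroup R3 ≤ commutator GL2 := by
  rintro g ⟨A, rfl⟩
  have hA : A ∈ Egen := gen_all A
  have hcl : Egen ≤ Subgroup.comap (toGL (n := Fin 2) (R := R3)) ⁅(⊤ : Subgroup GL2), ⊤⁆ := by
    rw [Egen, Subgroup.closure_le]
    rintro x (⟨s, rfl⟩ | ⟨s, rfl⟩) <;>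
    · obtain ⟨tu, htu⟩ := isUnit_two
      have hts : -2 * -(↑tu⁻¹ * s) = s := by
        have h1 : (↑tu⁻¹ : R3) * 2 = 1 := by rw [← htu]; exact Units.inv_mul _
        linear_combination s * h1
      simp only [SetLike.mem_coe, Subgroup.mem_comap]
      first
      | rw [show s = -2 * -(↑tu⁻¹ * s) from hts.symm, ← commU]
      | rw [show s = -2 * -(↑tu⁻¹ * s) from hts.symm, ← commL]
      exact Subgroup.commutator_mem_commutator (Subgroup.mem_top _) (Subgroup.mem_top _)
  exact hcl hA

end
open scoped Topology

noncomputable section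

abbrev Mat2 := Matrix (Fin 2) (Fin 2) R3

def phi (k : ℕ) : GL2 →* GL (Fin 2) (ZMod (3^k)) :=
  Units.map ((PadicInt.toZModPow k).mapMatrix.toMonoidHom)

def Kk (k : ℕ) : Subgroup GL2 := (phi k).ker

instance (k : ℕ) : (Kk k).Normal := MonoidHom.normal_ker _

lemma mem_Kk {k : ℕ} {u : GL2} :
    u ∈ Kk k ↔ ∀ i j, ‖(u : Mat2) i j - (1 : Mat2) i j‖ ≤ (3:ℝ)^(-(k:ℤ)) := by
  rw [Kk, MonoidHom.mem_ker, Units.ext_iff]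
  have hval : (phi k u : Matrix (Fin 2) (Fin 2) (ZMod (3^k)))
      = (u : Mat2).map (PadicInt.toZModPow k) := rfl
  rw [hval]
  have hcast : (((3:ℕ)):ℝ) = (3:ℝ) := by norm_num
  constructor
  · intro h i j
    have := congrFun (congrFun h i) j
    rw [Matrix.map_apply] at this
    rw [← hcast, PadicInt.norm_le_pow_iff_mem_span_pow, ← PadicInt.ker_toZModPow, RingHom.mem_ker,
      map_sub, sub_eq_zero, this]
    rcases eq_or_ne i j with rfl | hij
    · simp [Matrix.one_apply_eq]
    · simp [Matrix.one_apply_ne hij]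
  · intro h
    ext i j
    have := h i j
    rw [← hcast, PadicInt.norm_le_pow_iff_mem_span_pow, ← PadicInt.ker_toZModPow, RingHom.mem_ker,
      map_sub, sub_eq_zero] at this
    rw [Matrix.map_apply, this]
    rcases eq_or_ne i j with rfl | hij
    · simp [Matrix.one_apply_eq]
    · simp [Matrix.one_apply_ne hij]

lemma Kk_mono {k l : ℕ} (h : k ≤ l) : Kk l ≤ Kk k := by
  intro u hu
  rw [mem_Kk] at hu ⊢
  intro i j
  exact (hu i j).trans (zpow_le_zpow_right₀ (by norm_num) (by omega))

lemma Kk_isOpen (k : ℕ) : IsOpen ((Kk k : Subgroup GL2) : Set GL2) := by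
  have : ((Kk k : Subgroup GL2) : Set GL2) =
      ⋂ i, ⋂ j, {u : GL2 | ‖(u : Mat2) i j - (1 : Mat2) i j‖ < (3:ℝ)^(-(k:ℤ) + 1)} := by
    ext u
    simp only [Set.mem_iInter, Set.mem_setOf_eq, SetLike.mem_coe, mem_Kk]
    constructor
    · intro h i j
      have := h i j
      rw [show ((3:ℝ)^(-(k:ℤ)+1)) = (3:ℝ)^(-(k:ℤ)) * 3 by rw [zpow_add₀ (by norm_num : (3:ℝ) ≠ 0), zpow_one]]
      have hp : (0:ℝ) < (3:ℝ)^(-(k:ℤ)) := by positivity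
      linarith
    · intro h i j
      have h2 := (PadicInt.norm_le_pow_iff_norm_lt_pow_add_one ((u : Mat2) i j - (1 : Mat2) i j) (-(k:ℤ)))
      rw [show ((3:ℕ):ℝ) = (3:ℝ) by norm_num] at h2
      exact h2.mpr (h i j)
  rw [this]
  refine isOpen_iInter_of_finite fun i => isOpen_iInter_of_finite fun j => ?_
  have hc : Continuous fun u : GL2 => ‖(u : Mat2) i j - (1 : Mat2) i j‖ := by
    refine Continuous.norm (Continuous.sub ?_ continuous_const)
    have c1 : Continuous fun m : Mat2 => m i := continuous_apply (A := fun _ : Fin 2 => Fin 2 → R3) i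
    have c2 : Continuous fun v : Fin 2 → R3 => v j := continuous_apply j
    exact (c2.comp c1).comp Units.continuous_val
  exact isOpen_lt hc continuous_const

-- neighborhood basis claim in the pi world
lemma pi_basis {x : Fin 2 → Fin 2 → R3} {A : Set (Fin 2 → Fin 2 → R3)} (hA : A ∈ 𝓝 x) :
    ∃ k : ℕ, {m : Fin 2 → Fin 2 → R3 | ∀ i j, ‖m i j - x i j‖ ≤ (3:ℝ)^(-(k:ℤ))} ⊆ A := by
  obtain ⟨ε, hε, hball⟩ := Metric.mem_nhds_iff.mp hA
  obtain ⟨k, hk⟩ := exists_pow_lt_of_lt_one hε (by norm_num : (1/3:ℝ) < 1)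
  refine ⟨k, fun m hm => hball ?_⟩
  rw [Metric.mem_ball]
  rw [dist_pi_lt_iff hε]
  intro i
  rw [dist_pi_lt_iff hε]
  intro j
  rw [dist_eq_norm]
  calc ‖m i j - x i j‖ ≤ (3:ℝ)^(-(k:ℤ)) := hm i j
    _ = (1/3:ℝ)^k := by
        rw [one_div, inv_pow, ← zpow_natCast, ← _root_.zpow_neg]
    _ < ε := hk

lemma exists_Kk_subset {O : Set GL2} (hO : IsOpen O) (h1 : (1:GL2) ∈ O) :
    ∃ k : ℕ, 1 ≤ k ∧ ((Kk k : Subgroup GL2) : Set GL2) ⊆ O := by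
  have hnhds : O ∈ 𝓝 (1 : GL2) := hO.mem_nhds h1
  rw [Units.isInducing_embedProduct.nhds_eq_comap] at hnhds
  obtain ⟨T, hT, hTO⟩ := Filter.mem_comap.mp hnhds
  rw [mem_nhds_prod_iff] at hT
  obtain ⟨A, hA, B, hB, hAB⟩ := hT
  have hBu : (MulOpposite.op : Mat2 → Mat2ᵐᵒᵖ) ⁻¹' B ∈ 𝓝 (1 : Mat2) := by
    have := Filter.preimage_mem_comap (m := (MulOpposite.op : Mat2 → Mat2ᵐᵒᵖ)) hB
    rw [MulOpposite.comap_op_nhds] at this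
    have h2 : MulOpposite.unop ((Units.embedProduct Mat2) (1:GL2)).2 = (1 : Mat2) := rfl
    rwa [h2] at this
  have hA' : A ∈ 𝓝 ((1 : Mat2)) := by
    have : (Units.embedProduct Mat2 (1 : GL2)).1 = (1 : Mat2) := rfl
    rwa [this] at hA
  obtain ⟨k1, hk1⟩ := pi_basis (x := fun i j => (1 : Mat2) i j) (A := A) hA'
  obtain ⟨k2, hk2⟩ := pi_basis (x := fun i j => (1 : Mat2) i j) (A := (MulOpposite.op : Mat2 → Mat2ᵐᵒᵖ) ⁻¹' B) hBu
  refine ⟨max (max k1 k2) 1, le_max_right _ _, fun u hu => ?_⟩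
  apply hTO
  show Units.embedProduct Mat2 u ∈ T
  apply hAB
  constructor
  · apply hk1
    intro i j
    exact (mem_Kk.mp hu i j).trans (zpow_le_zpow_right₀ (by norm_num) (by
      have := le_max_left k1 k2
      have := le_max_left (max k1 k2) 1
      omega))
  · apply hk2
    intro i j
    have hu' : u⁻¹ ∈ Kk (max (max k1 k2) 1) := (Kk _).inv_mem hu
    exact (mem_Kk.mp hu' i j).trans (zpow_le_zpow_right₀ (by norm_num) (by
      have := le_max_right k1 k2
      have := le_max_left (max k1 k2) 1
      omega))

end
noncomputable section
open Matrix

lemma entry_mul_le (P Q : Mat2) (i j : Fin 2) {a b : ℝ}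
    (hP : ∀ i j, ‖P i j‖ ≤ a) (hQ : ∀ i j, ‖Q i j‖ ≤ b)
    (ha : 0 ≤ a) : ‖(P * Q) i j‖ ≤ a * b := by
  have : (P * Q) i j = P i 0 * Q 0 j + P i 1 * Q 1 j := by
    rw [Matrix.mul_apply, Fin.sum_univ_two]
  rw [this]
  refine (PadicInt.nonarchimedean _ _).trans (max_le ?_ ?_) <;>
  · rw [norm_mul]
    exact mul_le_mul (hP _ _) (hQ _ _) (norm_nonneg _) ha

lemma cube_mem {j : ℕ} (hj : 1 ≤ j) {u : GL2} (hu : u ∈ Kk j) : u^3 ∈ Kk (j+1) := by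
  rw [mem_Kk] at hu ⊢
  set X : Mat2 := (u : Mat2) with hX
  set B : Mat2 := X - 1 with hB
  have hBent : ∀ i j', ‖B i j'‖ ≤ (3:ℝ)^(-(j:ℤ)) := by
    intro i j'
    have := hu i j'
    simpa [hB, Matrix.sub_apply] using this
  have hXent : ∀ i j', ‖X i j'‖ ≤ 1 := fun i j' => PadicInt.norm_le_one _
  have h3Xent : ∀ i j', ‖((3:R3) • X) i j'‖ ≤ (3:ℝ)⁻¹ := by
    intro i j'
    rw [Matrix.smul_apply, smul_eq_mul, norm_mul]
    have h3 : ‖(3:R3)‖ = ((3:ℕ):ℝ)⁻¹ := by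
      rw [show ((3:R3)) = (((3:ℕ)):R3) by norm_num]
      exact PadicInt.norm_p
    rw [h3, show (((3:ℕ)):ℝ) = (3:ℝ) by norm_num]
    calc (3:ℝ)⁻¹ * ‖X i j'‖ ≤ (3:ℝ)⁻¹ * 1 := by
          gcongr; · norm_num; · exact hXent _ _
      _ = (3:ℝ)⁻¹ := mul_one _
  have hid : (u^3 : GL2).val - 1 = B * B * B + B * ((3:R3) • X) := by
    rw [Units.val_pow_eq_pow_val, ← hX, hB]
    have h3 : (3:R3) • X = X + X + X := by
      rw [show (3:R3) = 1 + 1 + 1 by norm_num, add_smul, add_smul, one_smul]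
    rw [h3]
    noncomm_ring
  intro i j'
  have heq : (u^3 : GL2).val i j' - (1:Mat2) i j' = (B * B * B) i j' + (B * ((3:R3) • X)) i j' := by
    rw [← Matrix.add_apply, ← hid, Matrix.sub_apply]
  rw [heq]
  have hpos : (0:ℝ) ≤ (3:ℝ)^(-(j:ℤ)) := by positivity
  have hBB : ∀ i j', ‖(B * B) i j'‖ ≤ (3:ℝ)^(-(j:ℤ)) * (3:ℝ)^(-(j:ℤ)) :=
    fun i j' => entry_mul_le B B i j' hBent hBent hpos
  have h1 : ‖(B * B * B) i j'‖ ≤ ((3:ℝ)^(-(j:ℤ)) * (3:ℝ)^(-(j:ℤ))) * (3:ℝ)^(-(j:ℤ)) :=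
    entry_mul_le (B*B) B i j' hBB hBent (by positivity)
  have h2 : ‖(B * ((3:R3) • X)) i j'‖ ≤ (3:ℝ)^(-(j:ℤ)) * (3:ℝ)⁻¹ :=
    entry_mul_le B _ i j' hBent h3Xent hpos
  refine (PadicInt.nonarchimedean _ _).trans (max_le ?_ ?_)
  · refine h1.trans ?_
    rw [← zpow_add₀ (by norm_num : (3:ℝ) ≠ 0), ← zpow_add₀ (by norm_num : (3:ℝ) ≠ 0)]
    exact zpow_le_zpow_right₀ (by norm_num) (by omega)
  · refine h2.trans ?_
    rw [show ((3:ℝ)⁻¹) = (3:ℝ)^(-1:ℤ) by norm_num, ← zpow_add₀ (by norm_num : (3:ℝ) ≠ 0)]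
    exact zpow_le_zpow_right₀ (by norm_num) (by omega)

lemma pow3_mem {j m : ℕ} (hj : 1 ≤ j) {u : GL2} (hu : u ∈ Kk j) : u^(3^m) ∈ Kk (j+m) := by
  induction m with
  | zero => simpa using hu
  | succ m ih =>
    have : u ^ (3^(m+1)) = (u ^ (3^m))^3 := by rw [← pow_mul, pow_succ]
    rw [this, show j + (m+1) = (j + m) + 1 by omega]
    exact cube_mem (by omega) ih

end

noncomputable section
open Matrix

instance solvG31 : Group.IsSolvable (GL (Fin 2) (ZMod (3^1))) := by
  rw [(by norm_num : (3:ℕ)^1 = 3)]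
  exact solvG3

open Pointwise

lemma perfect_contradiction (M : Subgroup GL2) [M.Normal] (hM : SL2subgroup R3 ⊔ M = ⊤)
    (hsolv : Group.IsSolvable (GL2 ⧸ M)) : M = ⊤ := by
  set π := QuotientGroup.mk' M with hπ
  have hsurj : Function.Surjective π := QuotientGroup.mk'_surjective M
  have hcomm : commutator (GL2 ⧸ M) = ⊤ := by
    have h1 : Subgroup.map π (SL2subgroup R3 ⊔ M) = ⊤ := by
      rw [hM]; exact Subgroup.map_top_of_surjective π hsurj
    rw [Subgroup.map_sup] at h1
    have h2 : Subgroup.map π M = ⊥ := by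
      rw [eq_bot_iff]
      rintro x ⟨y, hy, rfl⟩
      rw [Subgroup.mem_bot]
      exact (QuotientGroup.eq_one_iff y).mpr hy
    rw [h2, sup_bot_eq] at h1
    have h3 : Subgroup.map π (SL2subgroup R3) ≤ Subgroup.map π (commutator GL2) :=
      Subgroup.map_mono SL_le_commutator
    rw [commutator_def, Subgroup.map_commutator, Subgroup.map_top_of_surjective π hsurj] at h3
    rw [commutator_def, eq_top_iff]
    conv_lhs => rw [← h1]
    exact h3
  have hder : ∀ n, derivedSeries (GL2 ⧸ M) n = ⊤ := by
    intro n
    induction n with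
    | zero => exact rfl
    | succ n ih => rw [derivedSeries_succ, ih, ← commutator_def, hcomm]
  obtain ⟨n, hn⟩ := hsolv.solvable
  have htb : (⊤ : Subgroup (GL2 ⧸ M)) = ⊥ := by rw [← hder n, hn]
  ext x
  simp only [Subgroup.mem_top, iff_true]
  have hx1 : π x = 1 := by
    have : π x ∈ (⊥ : Subgroup (GL2 ⧸ M)) := htb ▸ Subgroup.mem_top (π x)
    rwa [Subgroup.mem_bot] at this
  exact (QuotientGroup.eq_one_iff x).mp hx1

lemma quot_map_surj (K M : Subgroup GL2) [K.Normal] [M.Normal] (h : K ≤ M) :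
    Function.Surjective (QuotientGroup.map K M (MonoidHom.id GL2)
      (fun x hx => h hx)) := by
  intro q
  obtain ⟨x, rfl⟩ := QuotientGroup.mk'_surjective M q
  exact ⟨QuotientGroup.mk x, rfl⟩


end

open Matrix Pointwise
/-- Let `N ⊴ GL₂(ℤ₃)` be a closed normal subgroup such that the closed subgroup
generated by `SL₂(ℤ₃)` together with `N` is all of `GL₂(ℤ₃)`.  Then `N = GL₂(ℤ₃)`. -/
theorem statement12 (N : Subgroup (GL (Fin 2) ℤ_[3])) [N.Normal]
    (hclosed : IsClosed (N : Set (GL (Fin 2) ℤ_[3])))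
    (hgen : (SL2subgroup ℤ_[3] ⊔ N).topologicalClosure = ⊤) : N = ⊤ := by
  by_contra hne
  have hex : ∃ g : GL2, g ∉ N := by
    by_contra h
    push_neg at h
    exact hne ((Subgroup.eq_top_iff' N).mpr h)
  obtain ⟨g, hg⟩ := hex
  have hOopen : IsOpen ((fun h : GL2 => g * h) ⁻¹' (↑N)ᶜ) :=
    (hclosed.isOpen_compl).preimage (continuous_mul_left g)
  have h1O : (1:GL2) ∈ (fun h : GL2 => g * h) ⁻¹' (↑N)ᶜ := by
    simp only [Set.mem_preimage, mul_one, Set.mem_compl_iff, SetLike.mem_coe]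
    exact hg
  obtain ⟨k, hk1, hkO⟩ := exists_Kk_subset hOopen h1O
  have hsup : ∀ (P : Subgroup GL2), N ≤ P → IsOpen (P : Set GL2) →
      SL2subgroup R3 ⊔ P = ⊤ := by
    intro P hNP hPopen
    have hcl : IsClosed ((SL2subgroup R3 ⊔ P : Subgroup GL2) : Set GL2) :=
      Subgroup.isClosed_of_isOpen _ (Subgroup.isOpen_mono le_sup_right hPopen)
    have hle := Subgroup.topologicalClosure_minimal (SL2subgroup R3 ⊔ N)
      (sup_le le_sup_left (le_trans hNP le_sup_right)) hcl
    rw [hgen] at hle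
    exact top_le_iff.mp hle
  have hgM : g ∉ N ⊔ Kk k := by
    intro hgM
    have hmem : (g : GL2) ∈ ((N : Set GL2) * (Kk k : Set GL2)) := by
      rw [← Subgroup.mul_normal]
      exact hgM
    obtain ⟨n, hn, u, hu, rfl⟩ := hmem
    have hkeep := hkO ((Kk k).inv_mem hu)
    simp only [Set.mem_preimage, Set.mem_compl_iff, SetLike.mem_coe] at hkeep
    rw [mul_inv_cancel_right] at hkeep
    exact hkeep hn
  have hMne : N ⊔ Kk k ≠ ⊤ := fun h => hgM (h ▸ Subgroup.mem_top g)
  have hMopen : IsOpen ((N ⊔ Kk k : Subgroup GL2) : Set GL2) :=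
    Subgroup.isOpen_mono le_sup_right (Kk_isOpen k)
  haveI : NeZero ((3:ℕ)^k) := ⟨pow_ne_zero _ (by norm_num)⟩
  by_cases hP : N ⊔ Kk 1 = ⊤
  · -- Q := GL2 ⧸ (N ⊔ Kk k) is a finite 3-group
    have hfinrange : Finite (GL (Fin 2) (ZMod (3^k))) := by infer_instance
    have hfinq1 : Finite (GL2 ⧸ Kk k) :=
      Finite.of_equiv _ (QuotientGroup.quotientKerEquivRange (phi k)).symm.toEquiv
    have hfin : Finite (GL2 ⧸ (N ⊔ Kk k)) :=
      Finite.of_surjective _ (quot_map_surj (Kk k) (N ⊔ Kk k) le_sup_right)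
    have hpg : IsPGroup 3 (GL2 ⧸ (N ⊔ Kk k)) := by
      intro q
      obtain ⟨x, rfl⟩ := QuotientGroup.mk'_surjective (N ⊔ Kk k) q
      have hx : (x : GL2) ∈ ((N : Set GL2) * (Kk 1 : Set GL2)) := by
        rw [← Subgroup.mul_normal, hP]
        trivial
      obtain ⟨n, hn, u, hu, rfl⟩ := hx
      refine ⟨k - 1, ?_⟩
      have h1 : (QuotientGroup.mk' (N ⊔ Kk k)) (n*u) = (QuotientGroup.mk' (N ⊔ Kk k)) u := by
        rw [_root_.map_mul]
        have hn1 : (QuotientGroup.mk' (N ⊔ Kk k)) n = 1 :=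
          (QuotientGroup.eq_one_iff n).mpr (Subgroup.mem_sup_left hn)
        rw [hn1, one_mul]
      rw [h1, ← map_pow]
      have h2 : u ^ 3^(k-1) ∈ Kk k := by
        have := pow3_mem (m := k - 1) (le_refl 1) hu
        rwa [show 1 + (k-1) = k by omega] at this
      exact (QuotientGroup.eq_one_iff _).mpr (Subgroup.mem_sup_right h2)
    haveI : Fact (Nat.Prime 3) := ⟨by norm_num⟩
    haveI := hfin
    haveI := hpg.isNilpotent
    have hsolv : Group.IsSolvable (GL2 ⧸ (N ⊔ Kk k)) := inferInstance
    exact hMne (perfect_contradiction _ (hsup _ le_sup_left hMopen) hsolv)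
  · -- Q := GL2 ⧸ (N ⊔ Kk 1) is a quotient of a subgroup of GL₂(ZMod 3)
    have hPopen : IsOpen ((N ⊔ Kk 1 : Subgroup GL2) : Set GL2) :=
      Subgroup.isOpen_mono le_sup_right (Kk_isOpen 1)
    haveI : Group.IsSolvable ((phi 1).range) := inferInstance
    have s1 : Group.IsSolvable (GL2 ⧸ Kk 1) :=
      solvable_of_surjective (f := (QuotientGroup.quotientKerEquivRange (phi 1)).symm.toMonoidHom)
        (QuotientGroup.quotientKerEquivRange (phi 1)).symm.surjective
    haveI := s1
    have hsolv : Group.IsSolvable (GL2 ⧸ (N ⊔ Kk 1)) :=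
      solvable_of_surjective (quot_map_surj (Kk 1) (N ⊔ Kk 1) le_sup_right)
    exact hP (perfect_contradiction _ (hsup _ le_sup_left hPopen) hsolv)
end

section
/- Let H ⊴ GL₂(ℤ/9ℤ) be a normal subgroup such that the subgroup generated by SL₂(ℤ/9ℤ) together with H is all of GL₂(ℤ/9ℤ). Then H = GL₂(ℤ/9ℤ). -/
/-
`GL₂(ℤ/9ℤ)` is solvable: the kernel of reduction `GL₂(ℤ/9ℤ) → GL₂(𝔽₃)` is abelian
because its elements are `1 + 3M`, and `GL₂(𝔽₃)` is solvable through `SL₂(𝔽₃) ⊵ Q₈`.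
On the other hand `SL₂(ℤ/9ℤ)` lies in the commutator subgroup of `GL₂(ℤ/9ℤ)`: over a local ring
every matrix of determinant one is, up to one elementary factor, a product of elementary
matrices, and each elementary matrix is a commutator with a diagonal matrix. Hence
`GL₂(ℤ/9ℤ) ⧸ H` is a solvable group equal to its own commutator subgroup, so it is trivial.
-/

open scoped MatrixGroups

open scoped commutatorElement
open Matrix

theorem Group.isSolvable_of_commutator_le {G : Type*} [Group G] {N : Subgroup G}
    (hN : commutator G ≤ N) [Group.IsSolvable N] : Group.IsSolvable G := by
  have := Subgroup.Normal.of_commutator_le (G := G) hN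
  have := Subgroup.Normal.quotient_commutative_iff_commutator_le.mpr hN
  have : Group.IsSolvable (G ⧸ N) := Group.isSolvable_of_comm mul_comm'
  exact (Group.isSolvable_iff_subgroup_quotient N).mpr ⟨‹_›, ‹_›⟩

theorem Group.IsSolvable.eq_top_of_sup_eq_top {G : Type*} [Group G] [Group.IsSolvable G]
    {H K : Subgroup G} [H.Normal] (hK : K ≤ commutator G) (h : K ⊔ H = ⊤) : H = ⊤ := by
  set π := QuotientGroup.mk' H
  have hπ : Function.Surjective π := QuotientGroup.mk'_surjective H
  have hperfect : commutator (G ⧸ H) = ⊤ := top_unique <|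
    calc ⊤ = (K ⊔ H).map π := by rw [h, Subgroup.map_top_of_surjective π hπ]
      _ = K.map π := by
        rw [Subgroup.map_sup, (Subgroup.map_eq_bot_iff _).mpr (QuotientGroup.ker_mk' H).ge,
          sup_bot_eq]
      _ ≤ (commutator G).map π := Subgroup.map_mono hK
      _ = commutator (G ⧸ H) := by
        rw [← derivedSeries_one, map_derivedSeries_eq hπ, derivedSeries_one]
  rw [← QuotientGroup.subsingleton_iff, ← not_nontrivial_iff_subsingleton]
  intro _
  exact (Group.IsSolvable.commutator_lt_top_of_nontrivial (G ⧸ H)).ne hperfect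

namespace Matrix.GeneralLinearGroup

section Solvable

variable {n R S : Type*} [Fintype n] [DecidableEq n] [CommRing R] [CommRing S]

theorem mul_comm_of_mem_ker_map {f : R →+* S} (hf : RingHom.ker f ^ 2 = ⊥) {g h : GL n R}
    (hg : g ∈ (map f).ker) (hh : h ∈ (map f).ker) : g * h = h * g := by
  have sub_one_mem {k : GL n R} (hk : k ∈ (map f).ker) (i j : n) :
      ((k : Matrix n n R) - 1) i j ∈ RingHom.ker f := by
    have := congrArg (fun k : GL n S ↦ (k : Matrix n n S) i j) (MonoidHom.mem_ker.mp hk)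
    simpa [RingHom.mem_ker, Matrix.one_apply, apply_ite f, sub_eq_zero] using this
  have mul_eq_zero_of_mem {M N : Matrix n n R} (hM : ∀ i j, M i j ∈ RingHom.ker f)
      (hN : ∀ i j, N i j ∈ RingHom.ker f) : M * N = 0 := by
    ext i j
    refine Finset.sum_eq_zero fun k _ ↦ ?_
    have := Ideal.mul_mem_mul (hM i k) (hN k j)
    rwa [← sq, hf, Ideal.mem_bot] at this
  have hgh := mul_eq_zero_of_mem (sub_one_mem hg) (sub_one_mem hh)
  have hhg := mul_eq_zero_of_mem (sub_one_mem hh) (sub_one_mem hg)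
  ext1
  rw [Units.val_mul, Units.val_mul, ← add_sub_cancel 1 (g : Matrix n n R),
    ← add_sub_cancel 1 (h : Matrix n n R)]
  simp only [mul_add, add_mul, one_mul, mul_one, hgh, hhg]
  abel

theorem isSolvable_of_ker_sq_eq_bot (f : R →+* S) (hf : RingHom.ker f ^ 2 = ⊥)
    [Group.IsSolvable (GL n S)] : Group.IsSolvable (GL n R) := by
  have : Group.IsSolvable (map (n := n) f).ker :=
    Group.isSolvable_of_comm fun g h ↦ Subtype.ext (mul_comm_of_mem_ker_map hf g.2 h.2)
  exact Group.isSolvable_of_ker_le_range (map f).ker.subtype (map f) (by simp)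

theorem isSolvable_of_isSolvable_specialLinearGroup [Group.IsSolvable (SpecialLinearGroup n R)] :
    Group.IsSolvable (GL n R) :=
  Group.isSolvable_of_ker_le_range SpecialLinearGroup.toGL det fun g hg ↦
    ⟨⟨g, congrArg Units.val hg⟩, Units.ext rfl⟩

end Solvable

section FinTwo

variable {R : Type*} [CommRing R]

@[simps apply]
def lowerLeftHom : AddChar R (GL (Fin 2) R) where
  toFun x := ⟨!![1, 0; x, 1], !![1, 0; -x, 1], by simp [one_fin_two], by simp [one_fin_two]⟩
  map_zero_eq_one' := by simp [Units.ext_iff, one_fin_two]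
  map_add_eq_mul' a b := by simp [Units.ext_iff, add_comm]

def diag2 (u v : Rˣ) : GL (Fin 2) R :=
  ⟨!![(u : R), 0; 0, (v : R)], !![((u⁻¹ : Rˣ) : R), 0; 0, ((v⁻¹ : Rˣ) : R)],
    by simp [one_fin_two], by simp [one_fin_two]⟩

theorem diag2_mul_upperRightHom_mul_inv (u v : Rˣ) (t : R) :
    diag2 u v * upperRightHom t * (diag2 u v)⁻¹ = upperRightHom (u * t * ↑v⁻¹) := by
  ext i j
  fin_cases i <;> fin_cases j <;> simp [diag2]

theorem diag2_mul_lowerLeftHom_mul_inv (u v : Rˣ) (t : R) :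
    diag2 u v * lowerLeftHom t * (diag2 u v)⁻¹ = lowerLeftHom (v * t * ↑u⁻¹) := by
  ext i j
  fin_cases i <;> fin_cases j <;> simp [diag2]

theorem upperRightHom_mem_commutator {u : Rˣ} (hu : IsUnit ((u : R) - 1)) (t : R) :
    upperRightHom t ∈ commutator (GL (Fin 2) R) := by
  have key : ⁅diag2 u 1, upperRightHom (↑hu.unit⁻¹ * t)⁆ = upperRightHom t := by
    rw [commutatorElement_def, diag2_mul_upperRightHom_mul_inv, ← AddChar.map_neg_eq_inv,
      ← AddChar.map_add_eq_mul]
    congr 1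
    simp only [inv_one, Units.val_one, mul_one]
    linear_combination t * hu.mul_val_inv
  exact key ▸ Subgroup.commutator_mem_commutator (Subgroup.mem_top _) (Subgroup.mem_top _)

theorem lowerLeftHom_mem_commutator {u : Rˣ} (hu : IsUnit ((u : R) - 1)) (t : R) :
    lowerLeftHom t ∈ commutator (GL (Fin 2) R) := by
  have key : ⁅diag2 1 u, lowerLeftHom (↑hu.unit⁻¹ * t)⁆ = lowerLeftHom t := by
    rw [commutatorElement_def, diag2_mul_lowerLeftHom_mul_inv, ← AddChar.map_neg_eq_inv,
      ← AddChar.map_add_eq_mul]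
    congr 1
    simp only [inv_one, Units.val_one, mul_one]
    linear_combination t * hu.mul_val_inv
  exact key ▸ Subgroup.commutator_mem_commutator (Subgroup.mem_top _) (Subgroup.mem_top _)

theorem eq_upperRightHom_mul_lowerLeftHom_mul_upperRightHom {g : GL (Fin 2) R}
    (hdet : (g : Matrix (Fin 2) (Fin 2) R).det = 1) (hc : IsUnit (g 1 0)) :
    g = upperRightHom ((g 0 0 - 1) * ↑hc.unit⁻¹) * lowerLeftHom (g 1 0) *
      upperRightHom ((g 1 1 - 1) * ↑hc.unit⁻¹) := by
  rw [det_fin_two] at hdet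
  have hinv := hc.mul_val_inv
  ext i j
  fin_cases i <;> fin_cases j <;> simp [mul_apply, Fin.sum_univ_two]
  · linear_combination (1 - g 0 0) * hinv
  · linear_combination (-g 0 1 - (g 0 0 - 1) * (g 1 1 - 1) * ↑hc.unit⁻¹) * hinv -
      ↑hc.unit⁻¹ * hdet
  · linear_combination (1 - g 1 1) * hinv

theorem mem_commutator_of_det_eq_one_of_isUnit {u : Rˣ} (hu : IsUnit ((u : R) - 1))
    {g : GL (Fin 2) R} (hdet : (g : Matrix (Fin 2) (Fin 2) R).det = 1) (hc : IsUnit (g 1 0)) :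
    g ∈ commutator (GL (Fin 2) R) := by
  rw [eq_upperRightHom_mul_lowerLeftHom_mul_upperRightHom hdet hc]
  exact mul_mem (mul_mem (upperRightHom_mem_commutator hu _) (lowerLeftHom_mem_commutator hu _))
    (upperRightHom_mem_commutator hu _)

theorem SL2subgroup_le_commutator [IsLocalRing R] {u : Rˣ} (hu : IsUnit ((u : R) - 1)) :
    SL2subgroup R ≤ commutator (GL (Fin 2) R) := by
  rintro _ ⟨s, rfl⟩
  set g := SpecialLinearGroup.toGL s
  have hdet : (g : Matrix (Fin 2) (Fin 2) R).det = 1 := s.2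
  by_cases hc : IsUnit (g 1 0)
  · exact mem_commutator_of_det_eq_one_of_isUnit hu hdet hc
  have ha : IsUnit (g 0 0) := by
    rw [det_fin_two, sub_eq_add_neg] at hdet
    rcases IsLocalRing.isUnit_or_isUnit_of_add_one hdet with h | h
    · exact isUnit_of_mul_isUnit_left h
    · exact absurd (isUnit_of_mul_isUnit_right ((IsUnit.neg_iff _).mp h)) hc
  have hac : IsUnit (g 0 0 + g 1 0) := by
    by_contra h
    refine IsLocalRing.nonunits_add h (fun h' ↦ hc (IsUnit.neg_iff _ |>.mp h')) ?_
    simpa using ha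
  set g' := lowerLeftHom 1 * g
  have hdet' : (g' : Matrix (Fin 2) (Fin 2) R).det = 1 := by
    rw [Units.val_mul, det_mul, hdet, mul_one]
    simp [det_fin_two]
  have hc' : IsUnit (g' 1 0) := by
    simpa [g', mul_apply, Fin.sum_univ_two] using hac
  have hg : g = (lowerLeftHom 1)⁻¹ * g' := (inv_mul_cancel_left _ _).symm
  rw [hg]
  exact mul_mem (inv_mem (lowerLeftHom_mem_commutator hu 1))
    (mem_commutator_of_det_eq_one_of_isUnit hu hdet' hc')

end FinTwo

end Matrix.GeneralLinearGroup

namespace Matrix.SpecialLinearGroup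

def quaternionSubgroup : Subgroup SL(2, ZMod 3) where
  carrier := {g | g ^ 4 = 1}
  one_mem' := one_pow 4
  mul_mem' := by
    have : ∀ a b : SL(2, ZMod 3), a ^ 4 = 1 → b ^ 4 = 1 → (a * b) ^ 4 = 1 := by decide
    exact fun {a b} ↦ this a b
  inv_mem' {g} hg := by simp_all [inv_pow]

theorem commutator_le_quaternionSubgroup : commutator SL(2, ZMod 3) ≤ quaternionSubgroup := by
  have : ∀ a b : SL(2, ZMod 3), ⁅a, b⁆ ^ 4 = 1 := by decide
  rw [commutator_def, Subgroup.commutator_le]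
  exact fun a _ b _ ↦ this a b

theorem isPGroup_quaternionSubgroup : IsPGroup 2 quaternionSubgroup :=
  fun g ↦ ⟨2, Subtype.ext g.2⟩

end Matrix.SpecialLinearGroup

theorem isSolvable_GL_fin_two_zmod_nine : Group.IsSolvable (GL (Fin 2) (ZMod 9)) := by
  have := SpecialLinearGroup.isPGroup_quaternionSubgroup.isNilpotent
  have : Group.IsSolvable SL(2, ZMod 3) :=
    Group.isSolvable_of_commutator_le SpecialLinearGroup.commutator_le_quaternionSubgroup
  have : Group.IsSolvable (GL (Fin 2) (ZMod 3)) :=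
    GeneralLinearGroup.isSolvable_of_isSolvable_specialLinearGroup
  refine GeneralLinearGroup.isSolvable_of_ker_sq_eq_bot
    (ZMod.castHom (by norm_num : 3 ∣ 9) (ZMod 3)) ?_
  rw [sq, ← le_bot_iff, Ideal.mul_le]
  simp only [RingHom.mem_ker, Ideal.mem_bot]
  decide

instance : IsLocalRing (ZMod 9) := by
  have : Fact (1 < 9) := ⟨by norm_num⟩
  refine IsLocalRing.of_isUnit_or_isUnit_one_sub_self fun a ↦ ?_
  have : ∀ a : ZMod 9, (∃ b, a * b = 1) ∨ ∃ b, (1 - a) * b = 1 := by decide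
  exact (this a).imp (fun ⟨b, hb⟩ ↦ IsUnit.of_mul_eq_one b hb)
    fun ⟨b, hb⟩ ↦ IsUnit.of_mul_eq_one b hb

/-- Let `H ⊴ GL₂(ℤ/9ℤ)` be a normal subgroup such that the subgroup generated by
`SL₂(ℤ/9ℤ)` together with `H` is all of `GL₂(ℤ/9ℤ)`.  Then `H = GL₂(ℤ/9ℤ)`. -/
theorem statement13 (H : Subgroup (GL (Fin 2) (ZMod 9))) [H.Normal]
    (h : SL2subgroup (ZMod 9) ⊔ H = ⊤) : H = ⊤ :=
  have := isSolvable_GL_fin_two_zmod_nine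
  have hu : IsUnit (((-1 : (ZMod 9)ˣ) : ZMod 9) - 1) := IsUnit.of_mul_eq_one 4 (by decide)
  Group.IsSolvable.eq_top_of_sup_eq_top
    (GeneralLinearGroup.SL2subgroup_le_commutator hu) h
end

section
/- Let K be a number field whose absolute discriminant Δ_K is odd, and let 𝔭 ⊆ O_K be a prime ideal lying over 2. Let α ∈ O_K be a nonzero element such that 𝔭 does not divide the ideal αO_K. Then 2α is not a square in K^×, so K(√(2α)) is a quadratic extension of K; moreover, 𝔭 ramifies in the extension K(√(2α))/K. -/
/-!
Since `Δ_K` is odd, `2` is unramified in `K`, so `2 O_K = 𝔭 C` with `𝔭 ∤ C`; as `𝔭 ∤ α`, the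
prime `𝔭` divides `2α O_K` exactly once. If `2α = t²` in a Dedekind domain `S` over `O_K` and `𝔓`
is a prime of `S` above `𝔭`, then `𝔓 ∣ t`, so `𝔓²` divides `t² = 2α = 𝔭 · (C α)`, and since
`𝔓 ∤ C α` we get `𝔓² ∣ 𝔭 S`. For `S = O_K` this is absurd, so `2α` is not a square in `K`;
for `S = O_L` with `t = √(2α)` it says `e(𝔓 | 𝔭) ≥ 2`.
-/

open NumberField

open Ideal

theorem Prime.sq_dvd_of_mul_eq_mul_self {M : Type*} [CommMonoidWithZero M] [IsCancelMulZero M]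
    {p a b c : M} (hp : Prime p) (hpa : p ∣ a) (hpb : ¬ p ∣ b) (h : a * b = c * c) : p ^ 2 ∣ a := by
  have hpc : p ∣ c := by
    rcases hp.dvd_mul.mp (h ▸ dvd_mul_of_dvd_left hpa b) with hc | hc <;> exact hc
  refine hp.pow_dvd_of_dvd_mul_right 2 hpb ?_
  rw [h, sq]
  exact mul_dvd_mul hpc hpc

namespace Ideal

variable {R S : Type*} [CommRing R] [CommRing S]

theorem sq_dvd_map_of_apply_eq_mul_self [IsDedekindDomain S] (f : R →+* S) {𝔭 I : Ideal R}
    {𝔓 : Ideal S} [h𝔓 : 𝔓.IsPrime] (h𝔓ne : 𝔓 ≠ ⊥) (hcomap : 𝔓.comap f = 𝔭) (hI : ¬ I ≤ 𝔭)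
    {x : R} (hx : span {x} = 𝔭 * I) {t : S} (ht : f x = t * t) : 𝔓 ^ 2 ∣ 𝔭.map f := by
  refine (prime_of_isPrime h𝔓ne h𝔓).sq_dvd_of_mul_eq_mul_self (b := I.map f) (c := span {t})
    ?_ ?_ ?_
  · rw [dvd_iff_le, map_le_iff_le_comap, hcomap]
  · rwa [dvd_iff_le, map_le_iff_le_comap, hcomap]
  · rw [← Ideal.map_mul, ← hx, map_span, Set.image_singleton, ht,
      span_singleton_mul_span_singleton]

theorem one_lt_ramificationIdx'_of_sq_dvd [Algebra R S] [IsDedekindDomain S] {p : Ideal R}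
    {P : Ideal S} [hP : P.IsPrime] (hp : p.map (algebraMap R S) ≠ ⊥)
    (h : P ^ 2 ∣ p.map (algebraMap R S)) : 1 < ramificationIdx' p P := by
  have hle : p.map (algebraMap R S) ≤ P ^ 2 := le_of_dvd h
  have h0 := IsDedekindDomain.ramificationIdx'_ne_zero hp hP (hle.trans (pow_le_self two_ne_zero))
  have h1 := (ramificationIdx'_ne_one_iff (hle.trans (pow_le_self two_ne_zero))).mpr hle
  omega

end Ideal

theorem Module.finrank_eq_two_of_sq_eq {K L : Type*} [Field K] [Field L] [Algebra K L]
    {s : L} {a : K} (hs : s ^ 2 = algebraMap K L a) (ha : ¬ IsSquare a)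
    (hadj : Algebra.adjoin K {s} = ⊤) :
    Module.finrank K L = 2 := by
  have hint : IsIntegral K s := IsIntegral.of_pow two_pos (hs ▸ isIntegral_algebraMap)
  have hirr : Irreducible (Polynomial.X ^ 2 - Polynomial.C a) :=
    X_pow_sub_C_irreducible_of_prime Nat.prime_two fun b hb => ha ⟨b, by rw [← hb, sq]⟩
  have hmin : minpoly K s = Polynomial.X ^ 2 - Polynomial.C a :=
    (minpoly.eq_of_irreducible_of_monic hirr (by simp [hs])
      (Polynomial.monic_X_pow_sub_C a two_ne_zero)).symm
  have hKs : IntermediateField.adjoin K {s} = ⊤ := by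
    apply IntermediateField.toSubalgebra_injective
    rw [IntermediateField.adjoin_simple_toSubalgebra_of_isAlgebraic hint.isAlgebraic, hadj,
      IntermediateField.top_toSubalgebra]
  rw [← IntermediateField.finrank_top', ← hKs, IntermediateField.adjoin.finrank hint, hmin,
    Polynomial.natDegree_X_pow_sub_C]

theorem NumberField.not_span_two_le_sq_of_odd_discr {K : Type*} [Field K] [NumberField K]
    (hdisc : Odd (discr K)) (𝔭 : Ideal (𝓞 K)) [h𝔭 : 𝔭.IsPrime] (h2 : (2 : 𝓞 K) ∈ 𝔭) :
    ¬ span {(2 : 𝓞 K)} ≤ 𝔭 ^ 2 := by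
  have hunr : Algebra.IsUnramifiedAt ℤ 𝔭 :=
    (not_dvd_discr_iff_forall_mem K (𝓞 K) Int.prime_two).mp
      (by simpa [← even_iff_two_dvd] using hdisc) 𝔭 h𝔭 (by simpa using h2)
  have hlies : 𝔭.LiesOver (span {(2 : ℤ)}) :=
    (liesOver_span_iff h𝔭.ne_top Int.prime_two).mpr (by simpa using h2)
  have he : ramificationIdx' (span {(2 : ℤ)}) 𝔭 = 1 := by
    rw [ramificationIdx'_eq_ramificationIdx _ _ (by simp)]
    exact ramificationIdx_eq_one 𝔭 ℤ
  have hmap : (span {(2 : ℤ)}).map (algebraMap ℤ (𝓞 K)) = span {(2 : 𝓞 K)} := by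
    rw [map_span, Set.image_singleton, map_ofNat]
  rw [← hmap, ← ramificationIdx'_ne_one_iff (by rwa [hmap, span_singleton_le_iff_mem])]
  exact not_not.mpr he

theorem NumberField.exists_span_two_eq_mul_not_le {K : Type*} [Field K] [NumberField K]
    (hdisc : Odd (discr K)) {𝔭 : Ideal (𝓞 K)} [𝔭.IsPrime] (h2 : (2 : 𝓞 K) ∈ 𝔭) :
    ∃ C : Ideal (𝓞 K), span {(2 : 𝓞 K)} = 𝔭 * C ∧ ¬ C ≤ 𝔭 := by
  obtain ⟨C, hC⟩ := dvd_iff_le.mpr ((span_singleton_le_iff_mem _).mpr h2)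
  refine ⟨C, hC, fun hle => not_span_two_le_sq_of_odd_discr hdisc 𝔭 h2 ?_⟩
  rw [hC, sq]
  exact mul_mono_right hle

theorem IsDedekindDomain.not_isSquare_algebraMap_of_span_eq_mul {R : Type*} (K : Type*)
    [CommRing R] [IsDedekindDomain R] [Field K] [Algebra R K] [IsFractionRing R K]
    {𝔭 I : Ideal R} [h𝔭 : 𝔭.IsPrime] (h𝔭ne : 𝔭 ≠ ⊥) (hI : ¬ I ≤ 𝔭) {x : R}
    (hx : span {x} = 𝔭 * I) : ¬ IsSquare (algebraMap R K x) := by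
  rintro ⟨r, hr⟩
  obtain ⟨t, rfl⟩ := IsIntegrallyClosed.exists_algebraMap_eq_of_isIntegral_pow (R := R) (x := r)
    two_pos (by rw [sq, ← hr]; exact isIntegral_algebraMap)
  have h𝔭sq := sq_dvd_map_of_apply_eq_mul_self (RingHom.id R) h𝔭ne (comap_id 𝔭) hI hx
    (t := t) (FaithfulSMul.algebraMap_injective R K (by simpa using hr))
  have : 2 ≤ 1 := (pow_dvd_pow_iff h𝔭ne (by simpa using h𝔭.ne_top)).mp (by simpa using h𝔭sq)
  omega

theorem NumberField.exists_one_lt_ramificationIdx'_of_sq_eq {K L : Type*} [Field K]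
    [NumberField K] [Field L] [Algebra K L] [NumberField L] {𝔭 I : Ideal (𝓞 K)} [𝔭.IsPrime]
    (h𝔭ne : 𝔭 ≠ ⊥) (hI : ¬ I ≤ 𝔭) {x : 𝓞 K} (hx : span {x} = 𝔭 * I) {s : L}
    (hs : s ^ 2 = algebraMap K L (algebraMap (𝓞 K) K x)) :
    ∃ 𝔓 : Ideal (𝓞 L), 𝔓.IsPrime ∧ 𝔓.comap (algebraMap (𝓞 K) (𝓞 L)) = 𝔭 ∧
      1 < ramificationIdx' 𝔭 𝔓 := by
  obtain ⟨t, rfl⟩ : ∃ t : 𝓞 L, (t : L) = s :=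
    ⟨⟨s, IsIntegral.of_pow two_pos
      (hs ▸ (RingOfIntegers.isIntegral_coe x).map (IsScalarTower.toAlgHom ℤ K L))⟩, rfl⟩
  rw [← IsScalarTower.algebraMap_apply, IsScalarTower.algebraMap_apply (𝓞 K) (𝓞 L) L, sq] at hs
  obtain ⟨𝔓, h𝔓, h𝔓𝔭⟩ := (nonempty_primesOver 𝔭 (S := 𝓞 L)).some
  have hcomap : 𝔓.comap (algebraMap (𝓞 K) (𝓞 L)) = 𝔭 := ((liesOver_iff _ _).mp h𝔓𝔭).symm
  refine ⟨𝔓, h𝔓, hcomap, one_lt_ramificationIdx'_of_sq_dvd (map_ne_bot_of_ne_bot h𝔭ne) ?_⟩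
  exact sq_dvd_map_of_apply_eq_mul_self _ (ne_bot_of_liesOver_of_ne_bot h𝔭ne 𝔓) hcomap hI hx
    (t := t) (RingOfIntegers.ext hs.symm)

theorem statement14_general (K : Type*) [Field K] [NumberField K]
    (hdisc : Odd (NumberField.discr K))
    (𝔭 : Ideal (𝓞 K)) (h𝔭 : 𝔭.IsPrime) (h2 : (2 : 𝓞 K) ∈ 𝔭)
    (α : 𝓞 K) (hnd : ¬ 𝔭 ∣ Ideal.span {α}) :
    ¬ IsSquare ((algebraMap (𝓞 K) K) (2 * α)) ∧
      ∀ (L : Type*) [Field L] [Algebra K L] [NumberField L] (s : L),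
        s ^ 2 = algebraMap K L ((algebraMap (𝓞 K) K) (2 * α)) →
        Algebra.adjoin K {s} = ⊤ →
        Module.finrank K L = 2 ∧
          ∃ 𝔓 : Ideal (𝓞 L), 𝔓.IsPrime ∧
            Ideal.comap (algebraMap (𝓞 K) (𝓞 L)) 𝔓 = 𝔭 ∧
            1 < Ideal.ramificationIdx' 𝔭 𝔓 := by
  obtain ⟨C, hC, hC𝔭⟩ := exists_span_two_eq_mul_not_le hdisc h2
  have hI : ¬ C * span {α} ≤ 𝔭 := fun h =>
    (h𝔭.mul_le.mp h).elim hC𝔭 (by rwa [← dvd_iff_le])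
  have hx : span {2 * α} = 𝔭 * (C * span {α}) := by
    rw [← mul_assoc, ← hC, span_singleton_mul_span_singleton]
  have h𝔭ne : 𝔭 ≠ ⊥ := fun h => two_ne_zero (α := 𝓞 K) (by rwa [h, mem_bot] at h2)
  have hnsq := IsDedekindDomain.not_isSquare_algebraMap_of_span_eq_mul K h𝔭ne hI hx
  exact ⟨hnsq, fun L _ _ _ s hs hadj => ⟨Module.finrank_eq_two_of_sq_eq hs hnsq hadj,
    exists_one_lt_ramificationIdx'_of_sq_eq h𝔭ne hI hx hs⟩⟩

/-- Let `K` be a number field with odd absolute discriminant, `𝔭 ⊆ O_K` a prime ideal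
lying over `2`, and `α ∈ O_K` a nonzero element with `𝔭 ∤ αO_K`.  Then `2α` is not a
square in `K`, so `K(√(2α))` is a quadratic extension of `K`; moreover `𝔭` ramifies
in `K(√(2α))/K`. -/
theorem statement14 (K : Type*) [Field K] [NumberField K]
    (hdisc : Odd (NumberField.discr K))
    (𝔭 : Ideal (𝓞 K)) (h𝔭 : 𝔭.IsPrime) (h2 : (2 : 𝓞 K) ∈ 𝔭)
    (α : 𝓞 K) (hα : α ≠ 0) (hnd : ¬ 𝔭 ∣ Ideal.span {α}) :
    ¬ IsSquare ((algebraMap (𝓞 K) K) (2 * α)) ∧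
      ∀ (L : Type*) [Field L] [Algebra K L] [NumberField L] (s : L),
        s ^ 2 = algebraMap K L ((algebraMap (𝓞 K) K) (2 * α)) →
        Algebra.adjoin K {s} = ⊤ →
        Module.finrank K L = 2 ∧
          ∃ 𝔓 : Ideal (𝓞 L), 𝔓.IsPrime ∧
            Ideal.comap (algebraMap (𝓞 K) (𝓞 L)) 𝔓 = 𝔭 ∧
            1 < Ideal.ramificationIdx' 𝔭 𝔓 :=
  statement14_general K hdisc 𝔭 h𝔭 h2 α hnd
end
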